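/- arXiv:2501.00481 — 3 statements merged into one kernel-verified Lean document; each statement's English description precedes it below -/
import Mathlib

section
/- Let τ be the Gurevich–Rautenberg–Vorob'ev style translation from the language of Nelson's logic N4 (with primitive strong negation ¬) into the language of intuitionistic logic extended with a fresh primed copy P′ of each predicate letter P, defined by: τ(P(t̄)) = P(t̄), τ(¬P(t̄)) = P′(t̄), τ commutes with ∧, ∨, →, ∀, ∃, τ(¬¬A) = τ(A), τ(¬(A→B)) = τ(A) ∧ τ(¬B), τ(¬(A∧B)) = τ(¬A) ∨ τ(¬B), τ(¬(A∨B)) = τ(¬A) ∧ τ(¬B), τ(¬∀x A) = ∃x τ(¬A), τ(¬∃x A) = ∀x τ(¬A). Then for every formula A, A is provable in N4 if and only if τ(A) is provable in intuitionistic first-order logic with identity. -/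
/-- First-order terms: variables and constants. -/
inductive Tm where
  | var : ℕ → Tm
  | const : ℕ → Tm

/-- Formulas of Nelson's language `L¬` (primitive strong negation `neg`).
Identity is a distinguished predicate symbol (`eqp` below); in the free case the
existence predicate is a further distinguished predicate symbol (`exn` below). -/
inductive FormN (P : Type) where
  | atom : P → List Tm → FormN P
  | imp : FormN P → FormN P → FormN P
  | and : FormN P → FormN P → FormN P
  | or  : FormN P → FormN P → FormN P
  | neg : FormN P → FormN P
  | all : ℕ → FormN P → FormN P
  | ex  : ℕ → FormN P → FormN P

/-- Formulas of the intuitionistic language `L⊥` (falsum `bot` instead of `neg`). -/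
inductive FormI (P : Type) where
  | atom : P → List Tm → FormI P
  | bot : FormI P
  | imp : FormI P → FormI P → FormI P
  | and : FormI P → FormI P → FormI P
  | or  : FormI P → FormI P → FormI P
  | all : ℕ → FormI P → FormI P
  | ex  : ℕ → FormI P → FormI P

def Tm.subst (x : ℕ) (t : Tm) : Tm → Tm
  | .var y => if y = x then t else .var y
  | .const c => .const c

def Tm.fv : Tm → Set ℕ
  | .var y => {y}
  | .const _ => ∅

def FormN.subst {P : Type} (x : ℕ) (t : Tm) : FormN P → FormN P
  | .atom p ts => .atom p (ts.map (Tm.subst x t))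
  | .imp A B => .imp (A.subst x t) (B.subst x t)
  | .and A B => .and (A.subst x t) (B.subst x t)
  | .or A B => .or (A.subst x t) (B.subst x t)
  | .neg A => .neg (A.subst x t)
  | .all y A => if y = x then .all y A else .all y (A.subst x t)
  | .ex y A => if y = x then .ex y A else .ex y (A.subst x t)

def FormN.fv {P : Type} : FormN P → Set ℕ
  | .atom _ ts => {y | ∃ t ∈ ts, y ∈ t.fv}
  | .imp A B => A.fv ∪ B.fv
  | .and A B => A.fv ∪ B.fv
  | .or A B => A.fv ∪ B.fv
  | .neg A => A.fv
  | .all y A => A.fv \ {y}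
  | .ex y A => A.fv \ {y}

def FormN.bv {P : Type} : FormN P → Set ℕ
  | .atom _ _ => ∅
  | .imp A B => A.bv ∪ B.bv
  | .and A B => A.bv ∪ B.bv
  | .or A B => A.bv ∪ B.bv
  | .neg A => A.bv
  | .all y A => insert y A.bv
  | .ex y A => insert y A.bv

def FormI.subst {P : Type} (x : ℕ) (t : Tm) : FormI P → FormI P
  | .atom p ts => .atom p (ts.map (Tm.subst x t))
  | .bot => .bot
  | .imp A B => .imp (A.subst x t) (B.subst x t)
  | .and A B => .and (A.subst x t) (B.subst x t)
  | .or A B => .or (A.subst x t) (B.subst x t)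
  | .all y A => if y = x then .all y A else .all y (A.subst x t)
  | .ex y A => if y = x then .ex y A else .ex y (A.subst x t)

def FormI.fv {P : Type} : FormI P → Set ℕ
  | .atom _ ts => {y | ∃ t ∈ ts, y ∈ t.fv}
  | .bot => ∅
  | .imp A B => A.fv ∪ B.fv
  | .and A B => A.fv ∪ B.fv
  | .or A B => A.fv ∪ B.fv
  | .all y A => A.fv \ {y}
  | .ex y A => A.fv \ {y}

def FormI.bv {P : Type} : FormI P → Set ℕ
  | .atom _ _ => ∅
  | .bot => ∅
  | .imp A B => A.bv ∪ B.bv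
  | .and A B => A.bv ∪ B.bv
  | .or A B => A.bv ∪ B.bv
  | .all y A => insert y A.bv
  | .ex y A => insert y A.bv

def FreeForN {P : Type} (t : Tm) (A : FormN P) : Prop := ∀ v ∈ t.fv, v ∉ A.bv
def FreeForI {P : Type} (t : Tm) (A : FormI P) : Prop := ∀ v ∈ t.fv, v ∉ A.bv

/-- The Gurevich–Rautenberg–Vorob'ev strong-negation translation `τ` from
Nelson's language (predicate letters `ℕ`) into the intuitionistic language
extended with a fresh primed copy of each predicate letter (`Sum.inr p` is `p′`);
negated atoms go to primed atoms, `τ` commutes with the positive connectives and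
quantifiers, and negation is pushed through compounds constructively. -/
def tau : FormN ℕ → FormI (ℕ ⊕ ℕ)
  | .atom p ts => .atom (.inl p) ts
  | .imp A B => .imp (tau A) (tau B)
  | .and A B => .and (tau A) (tau B)
  | .or A B => .or (tau A) (tau B)
  | .all x A => .all x (tau A)
  | .ex x A => .ex x (tau A)
  | .neg (.atom p ts) => .atom (.inr p) ts
  | .neg (.neg A) => tau A
  | .neg (.imp A B) => .and (tau A) (tau (.neg B))
  | .neg (.and A B) => .or (tau (.neg A)) (tau (.neg B))
  | .neg (.or A B) => .and (tau (.neg A)) (tau (.neg B))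
  | .neg (.all x A) => .ex x (tau (.neg A))
  | .neg (.ex x A) => .all x (tau (.neg A))

def eqN {P : Type} (e : P) (t u : Tm) : FormN P := .atom e [t, u]
def eqI {P : Type} (e : P) (t u : Tm) : FormI P := .atom e [t, u]

/-- Atomic formulas and their negations (for the `=E` rule of N4). -/
def IsBasicN {P : Type} : FormN P → Prop
  | .atom _ _ => True
  | .neg (.atom _ _) => True
  | _ => False

/-- Natural deduction for Nelson's paraconsistent first-order logic N4 with
identity (identity predicate `eqp`): intuitionistic positive rules plus the
constructive rules for negated compounds. -/
inductive N4 {P : Type} (eqp : P) : Set (FormN P) → FormN P → Prop where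
  | hyp {Γ : Set (FormN P)} {A : FormN P} : A ∈ Γ → N4 eqp Γ A
  | andI {Γ : Set (FormN P)} {A B : FormN P} : N4 eqp Γ A → N4 eqp Γ B → N4 eqp Γ (A.and B)
  | andE1 {Γ : Set (FormN P)} {A B : FormN P} : N4 eqp Γ (A.and B) → N4 eqp Γ A
  | andE2 {Γ : Set (FormN P)} {A B : FormN P} : N4 eqp Γ (A.and B) → N4 eqp Γ B
  | orI1 {Γ : Set (FormN P)} {A B : FormN P} : N4 eqp Γ A → N4 eqp Γ (A.or B)
  | orI2 {Γ : Set (FormN P)} {A B : FormN P} : N4 eqp Γ B → N4 eqp Γ (A.or B)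
  | orE {Γ : Set (FormN P)} {A B C : FormN P} : N4 eqp Γ (A.or B) →
      N4 eqp (insert A Γ) C → N4 eqp (insert B Γ) C → N4 eqp Γ C
  | impI {Γ : Set (FormN P)} {A B : FormN P} : N4 eqp (insert A Γ) B → N4 eqp Γ (A.imp B)
  | impE {Γ : Set (FormN P)} {A B : FormN P} : N4 eqp Γ (A.imp B) → N4 eqp Γ A → N4 eqp Γ B
  | negnegI {Γ : Set (FormN P)} {A : FormN P} : N4 eqp Γ A → N4 eqp Γ A.neg.neg
  | negnegE {Γ : Set (FormN P)} {A : FormN P} : N4 eqp Γ A.neg.neg → N4 eqp Γ A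
  | negimpI {Γ : Set (FormN P)} {A B : FormN P} : N4 eqp Γ A → N4 eqp Γ B.neg →
      N4 eqp Γ (A.imp B).neg
  | negimpE1 {Γ : Set (FormN P)} {A B : FormN P} : N4 eqp Γ (A.imp B).neg → N4 eqp Γ A
  | negimpE2 {Γ : Set (FormN P)} {A B : FormN P} : N4 eqp Γ (A.imp B).neg → N4 eqp Γ B.neg
  | negorI {Γ : Set (FormN P)} {A B : FormN P} : N4 eqp Γ A.neg → N4 eqp Γ B.neg →
      N4 eqp Γ (A.or B).neg
  | negorE1 {Γ : Set (FormN P)} {A B : FormN P} : N4 eqp Γ (A.or B).neg → N4 eqp Γ A.neg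
  | negorE2 {Γ : Set (FormN P)} {A B : FormN P} : N4 eqp Γ (A.or B).neg → N4 eqp Γ B.neg
  | negandI1 {Γ : Set (FormN P)} {A B : FormN P} : N4 eqp Γ A.neg → N4 eqp Γ (A.and B).neg
  | negandI2 {Γ : Set (FormN P)} {A B : FormN P} : N4 eqp Γ B.neg → N4 eqp Γ (A.and B).neg
  | negandE {Γ : Set (FormN P)} {A B C : FormN P} : N4 eqp Γ (A.and B).neg →
      N4 eqp (insert A.neg Γ) C → N4 eqp (insert B.neg Γ) C → N4 eqp Γ C
  | allI {Γ : Set (FormN P)} {A : FormN P} {x y : ℕ} : N4 eqp Γ (A.subst x (.var y)) →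
      (∀ B ∈ Γ, y ∉ B.fv) → (y = x ∨ y ∉ A.fv) → N4 eqp Γ (.all x A)
  | allE {Γ : Set (FormN P)} {A : FormN P} {x : ℕ} {t : Tm} : N4 eqp Γ (.all x A) →
      FreeForN t A → N4 eqp Γ (A.subst x t)
  | negallI {Γ : Set (FormN P)} {A : FormN P} {x : ℕ} {t : Tm} :
      N4 eqp Γ (A.subst x t).neg → FreeForN t A → N4 eqp Γ (FormN.all x A).neg
  | negallE {Γ : Set (FormN P)} {A C : FormN P} {x y : ℕ} : N4 eqp Γ (FormN.all x A).neg →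
      N4 eqp (insert (A.subst x (.var y)).neg Γ) C →
      y ∉ C.fv → (∀ B ∈ Γ, y ∉ B.fv) → (y = x ∨ y ∉ A.fv) → N4 eqp Γ C
  | exI {Γ : Set (FormN P)} {A : FormN P} {x : ℕ} {t : Tm} : N4 eqp Γ (A.subst x t) →
      FreeForN t A → N4 eqp Γ (.ex x A)
  | exE {Γ : Set (FormN P)} {A C : FormN P} {x y : ℕ} : N4 eqp Γ (.ex x A) →
      N4 eqp (insert (A.subst x (.var y)) Γ) C →
      y ∉ C.fv → (∀ B ∈ Γ, y ∉ B.fv) → (y = x ∨ y ∉ A.fv) → N4 eqp Γ C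
  | negexI {Γ : Set (FormN P)} {A : FormN P} {x y : ℕ} :
      N4 eqp Γ (A.subst x (.var y)).neg → (∀ B ∈ Γ, y ∉ B.fv) → (y = x ∨ y ∉ A.fv) →
      N4 eqp Γ (FormN.ex x A).neg
  | negexE {Γ : Set (FormN P)} {A : FormN P} {x : ℕ} {t : Tm} :
      N4 eqp Γ (FormN.ex x A).neg → FreeForN t A → N4 eqp Γ (A.subst x t).neg
  | eqIr {Γ : Set (FormN P)} {t : Tm} : N4 eqp Γ (eqN eqp t t)
  | eqEr {Γ : Set (FormN P)} {A : FormN P} {x : ℕ} {t₁ t₂ : Tm} :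
      N4 eqp Γ (eqN eqp t₁ t₂) → N4 eqp Γ (A.subst x t₁) → IsBasicN A →
      N4 eqp Γ (A.subst x t₂)

/-- Natural deduction for intuitionistic first-order logic with identity, over
the language `L⊥` (the negated rules of N4 are replaced by `⊥E`, and `=E` is
restricted to atomic formulas). -/
inductive IntP {P : Type} (eqp : P) : Set (FormI P) → FormI P → Prop where
  | hyp {Γ : Set (FormI P)} {A : FormI P} : A ∈ Γ → IntP eqp Γ A
  | botE {Γ : Set (FormI P)} {A : FormI P} : IntP eqp Γ .bot → IntP eqp Γ A
  | andI {Γ : Set (FormI P)} {A B : FormI P} : IntP eqp Γ A → IntP eqp Γ B → IntP eqp Γ (A.and B)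
  | andE1 {Γ : Set (FormI P)} {A B : FormI P} : IntP eqp Γ (A.and B) → IntP eqp Γ A
  | andE2 {Γ : Set (FormI P)} {A B : FormI P} : IntP eqp Γ (A.and B) → IntP eqp Γ B
  | orI1 {Γ : Set (FormI P)} {A B : FormI P} : IntP eqp Γ A → IntP eqp Γ (A.or B)
  | orI2 {Γ : Set (FormI P)} {A B : FormI P} : IntP eqp Γ B → IntP eqp Γ (A.or B)
  | orE {Γ : Set (FormI P)} {A B C : FormI P} : IntP eqp Γ (A.or B) →
      IntP eqp (insert A Γ) C → IntP eqp (insert B Γ) C → IntP eqp Γ C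
  | impI {Γ : Set (FormI P)} {A B : FormI P} : IntP eqp (insert A Γ) B → IntP eqp Γ (A.imp B)
  | impE {Γ : Set (FormI P)} {A B : FormI P} : IntP eqp Γ (A.imp B) → IntP eqp Γ A → IntP eqp Γ B
  | allI {Γ : Set (FormI P)} {A : FormI P} {x y : ℕ} : IntP eqp Γ (A.subst x (.var y)) →
      (∀ B ∈ Γ, y ∉ B.fv) → (y = x ∨ y ∉ A.fv) → IntP eqp Γ (.all x A)
  | allE {Γ : Set (FormI P)} {A : FormI P} {x : ℕ} {t : Tm} : IntP eqp Γ (.all x A) →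
      FreeForI t A → IntP eqp Γ (A.subst x t)
  | exI {Γ : Set (FormI P)} {A : FormI P} {x : ℕ} {t : Tm} : IntP eqp Γ (A.subst x t) →
      FreeForI t A → IntP eqp Γ (.ex x A)
  | exE {Γ : Set (FormI P)} {A C : FormI P} {x y : ℕ} : IntP eqp Γ (.ex x A) →
      IntP eqp (insert (A.subst x (.var y)) Γ) C →
      y ∉ C.fv → (∀ B ∈ Γ, y ∉ B.fv) → (y = x ∨ y ∉ A.fv) → IntP eqp Γ C
  | eqIr {Γ : Set (FormI P)} {t : Tm} : IntP eqp Γ (eqI eqp t t)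
  | eqEr {Γ : Set (FormI P)} {A : FormI P} {x : ℕ} {t₁ t₂ : Tm} :
      IntP eqp Γ (eqI eqp t₁ t₂) → IntP eqp Γ (A.subst x t₁) →
      (∃ p ts, A = FormI.atom p ts) → IntP eqp Γ (A.subst x t₂)


/-! ### Section A: basic syntax lemmas -/

section Basic
variable {P : Type}

@[simp] lemma Tm.subst_self (x : ℕ) : ∀ t : Tm, Tm.subst x (.var x) t = t := by
  intro t
  cases t with
  | var y => simp only [Tm.subst]; split <;> simp_all
  | const c => rfl

@[simp] lemma Tm.fv_var (y : ℕ) : (Tm.var y).fv = {y} := rfl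
@[simp] lemma Tm.fv_const (c : ℕ) : (Tm.const c).fv = (∅ : Set ℕ) := rfl

lemma Tm.subst_not_mem {x : ℕ} {s : Tm} : ∀ {t : Tm}, x ∉ t.fv → Tm.subst x s t = t := by
  intro t h
  cases t with
  | var y =>
      simp only [Tm.fv_var, Set.mem_singleton_iff] at h
      simp [Tm.subst, Ne.symm h]
  | const c => rfl

lemma List.map_subst_self (x : ℕ) (ts : List Tm) : ts.map (Tm.subst x (.var x)) = ts := by
  induction ts with
  | nil => rfl
  | cons a l ih => simp [ih]

lemma List.map_subst_not_mem {x : ℕ} {s : Tm} {ts : List Tm}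
    (h : ∀ t ∈ ts, x ∉ t.fv) : ts.map (Tm.subst x s) = ts := by
  induction ts with
  | nil => rfl
  | cons a l ih =>
      simp only [List.map_cons, List.cons.injEq]
      exact ⟨Tm.subst_not_mem (h a (by simp)), ih (fun t ht => h t (by simp [ht]))⟩

lemma FormN.subst_self (x : ℕ) : ∀ A : FormN P, A.subst x (.var x) = A := by
  intro A
  induction A with
  | atom p ts => simp [FormN.subst, List.map_subst_self]
  | imp A B ihA ihB => simp [FormN.subst, ihA, ihB]
  | and A B ihA ihB => simp [FormN.subst, ihA, ihB]
  | or A B ihA ihB => simp [FormN.subst, ihA, ihB]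
  | neg A ihA => simp [FormN.subst, ihA]
  | all y A ihA => by_cases h : y = x <;> simp [FormN.subst, h, ihA]
  | ex y A ihA => by_cases h : y = x <;> simp [FormN.subst, h, ihA]

lemma FormI.subst_self (x : ℕ) : ∀ A : FormI P, A.subst x (.var x) = A := by
  intro A
  induction A with
  | atom p ts => simp [FormI.subst, List.map_subst_self]
  | bot => rfl
  | imp A B ihA ihB => simp [FormI.subst, ihA, ihB]
  | and A B ihA ihB => simp [FormI.subst, ihA, ihB]
  | or A B ihA ihB => simp [FormI.subst, ihA, ihB]
  | all y A ihA => by_cases h : y = x <;> simp [FormI.subst, h, ihA]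
  | ex y A ihA => by_cases h : y = x <;> simp [FormI.subst, h, ihA]

lemma FormN.subst_not_mem {x : ℕ} {s : Tm} : ∀ {A : FormN P}, x ∉ A.fv → A.subst x s = A := by
  intro A
  induction A with
  | atom p ts =>
      intro h
      simp only [FormN.fv, Set.mem_setOf_eq, not_exists] at h
      push_neg at h
      simp only [FormN.subst, FormN.atom.injEq, true_and]
      exact List.map_subst_not_mem h
  | imp A B ihA ihB =>
      intro h
      simp only [FormN.fv, Set.mem_union] at h
      push_neg at h
      simp [FormN.subst, ihA h.1, ihB h.2]
  | and A B ihA ihB =>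
      intro h
      simp only [FormN.fv, Set.mem_union] at h
      push_neg at h
      simp [FormN.subst, ihA h.1, ihB h.2]
  | or A B ihA ihB =>
      intro h
      simp only [FormN.fv, Set.mem_union] at h
      push_neg at h
      simp [FormN.subst, ihA h.1, ihB h.2]
  | neg A ihA =>
      intro h
      simp only [FormN.fv] at h
      simp [FormN.subst, ihA h]
  | all y A ihA =>
      intro h
      simp only [FormN.fv, Set.mem_diff, Set.mem_singleton_iff] at h
      by_cases hyx : y = x
      · simp [FormN.subst, hyx]
      · have : x ∉ A.fv := fun hx => h ⟨hx, fun hxy => hyx (hxy ▸ rfl)⟩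
        simp [FormN.subst, hyx, ihA this]
  | ex y A ihA =>
      intro h
      simp only [FormN.fv, Set.mem_diff, Set.mem_singleton_iff] at h
      by_cases hyx : y = x
      · simp [FormN.subst, hyx]
      · have : x ∉ A.fv := fun hx => h ⟨hx, fun hxy => hyx (hxy ▸ rfl)⟩
        simp [FormN.subst, hyx, ihA this]

lemma FormI.subst_not_mem {x : ℕ} {s : Tm} : ∀ {A : FormI P}, x ∉ A.fv → A.subst x s = A := by
  intro A
  induction A with
  | atom p ts =>
      intro h
      simp only [FormI.fv, Set.mem_setOf_eq, not_exists] at h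
      push_neg at h
      simp only [FormI.subst, FormI.atom.injEq, true_and]
      exact List.map_subst_not_mem h
  | bot => intro _; rfl
  | imp A B ihA ihB =>
      intro h
      simp only [FormI.fv, Set.mem_union] at h
      push_neg at h
      simp [FormI.subst, ihA h.1, ihB h.2]
  | and A B ihA ihB =>
      intro h
      simp only [FormI.fv, Set.mem_union] at h
      push_neg at h
      simp [FormI.subst, ihA h.1, ihB h.2]
  | or A B ihA ihB =>
      intro h
      simp only [FormI.fv, Set.mem_union] at h
      push_neg at h
      simp [FormI.subst, ihA h.1, ihB h.2]
  | all y A ihA =>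
      intro h
      simp only [FormI.fv, Set.mem_diff, Set.mem_singleton_iff] at h
      by_cases hyx : y = x
      · simp [FormI.subst, hyx]
      · have : x ∉ A.fv := fun hx => h ⟨hx, fun hxy => hyx (hxy ▸ rfl)⟩
        simp [FormI.subst, hyx, ihA this]
  | ex y A ihA =>
      intro h
      simp only [FormI.fv, Set.mem_diff, Set.mem_singleton_iff] at h
      by_cases hyx : y = x
      · simp [FormI.subst, hyx]
      · have : x ∉ A.fv := fun hx => h ⟨hx, fun hxy => hyx (hxy ▸ rfl)⟩
        simp [FormI.subst, hyx, ihA this]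

/-- bound variables are unchanged by substitution -/
lemma FormN.bv_subst (x : ℕ) (t : Tm) : ∀ A : FormN P, (A.subst x t).bv = A.bv := by
  intro A
  induction A with
  | atom p ts => simp [FormN.subst, FormN.bv]
  | imp A B ihA ihB => simp [FormN.subst, FormN.bv, ihA, ihB]
  | and A B ihA ihB => simp [FormN.subst, FormN.bv, ihA, ihB]
  | or A B ihA ihB => simp [FormN.subst, FormN.bv, ihA, ihB]
  | neg A ihA => simp [FormN.subst, FormN.bv, ihA]
  | all y A ihA => by_cases h : y = x <;> simp [FormN.subst, FormN.bv, h, ihA]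
  | ex y A ihA => by_cases h : y = x <;> simp [FormN.subst, FormN.bv, h, ihA]

lemma FormI.bv_subst (x : ℕ) (t : Tm) : ∀ A : FormI P, (A.subst x t).bv = A.bv := by
  intro A
  induction A with
  | atom p ts => simp [FormI.subst, FormI.bv]
  | bot => rfl
  | imp A B ihA ihB => simp [FormI.subst, FormI.bv, ihA, ihB]
  | and A B ihA ihB => simp [FormI.subst, FormI.bv, ihA, ihB]
  | or A B ihA ihB => simp [FormI.subst, FormI.bv, ihA, ihB]
  | all y A ihA => by_cases h : y = x <;> simp [FormI.subst, FormI.bv, h, ihA]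
  | ex y A ihA => by_cases h : y = x <;> simp [FormI.subst, FormI.bv, h, ihA]

/-- free variables of a substitution instance -/
lemma Tm.fv_subst (x : ℕ) (s : Tm) : ∀ t : Tm, (Tm.subst x s t).fv ⊆ (t.fv \ {x}) ∪ s.fv := by
  intro t
  cases t with
  | var y =>
      by_cases h : y = x
      · simp [Tm.subst, h]
      · simp only [Tm.subst, if_neg h, Tm.fv_var]
        intro v hv; simp only [Set.mem_singleton_iff] at hv; subst hv
        exact Or.inl ⟨rfl, h⟩
  | const c => simp [Tm.subst]

lemma FormN.fv_subst (x : ℕ) (s : Tm) : ∀ A : FormN P, (A.subst x s).fv ⊆ (A.fv \ {x}) ∪ s.fv := by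
  intro A
  induction A with
  | atom p ts =>
      intro v hv
      simp only [FormN.subst, FormN.fv, Set.mem_setOf_eq, List.mem_map] at hv
      obtain ⟨t', ⟨t, ht, rfl⟩, hvt⟩ := hv
      have := Tm.fv_subst x s t hvt
      simp only [Set.mem_union, Set.mem_diff, Set.mem_singleton_iff] at this ⊢
      rcases this with ⟨h1, h2⟩ | h
      · exact Or.inl ⟨⟨t, ht, h1⟩, h2⟩
      · exact Or.inr h
  | imp A B ihA ihB =>
      intro v hv
      simp only [FormN.subst, FormN.fv, Set.mem_union] at hv ⊢
      rcases hv with h | h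
      · rcases ihA h with h' | h'
        · exact Or.inl ⟨Or.inl h'.1, h'.2⟩
        · exact Or.inr h'
      · rcases ihB h with h' | h'
        · exact Or.inl ⟨Or.inr h'.1, h'.2⟩
        · exact Or.inr h'
  | and A B ihA ihB =>
      intro v hv
      simp only [FormN.subst, FormN.fv, Set.mem_union] at hv ⊢
      rcases hv with h | h
      · rcases ihA h with h' | h'
        · exact Or.inl ⟨Or.inl h'.1, h'.2⟩
        · exact Or.inr h'
      · rcases ihB h with h' | h'
        · exact Or.inl ⟨Or.inr h'.1, h'.2⟩
        · exact Or.inr h'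
  | or A B ihA ihB =>
      intro v hv
      simp only [FormN.subst, FormN.fv, Set.mem_union] at hv ⊢
      rcases hv with h | h
      · rcases ihA h with h' | h'
        · exact Or.inl ⟨Or.inl h'.1, h'.2⟩
        · exact Or.inr h'
      · rcases ihB h with h' | h'
        · exact Or.inl ⟨Or.inr h'.1, h'.2⟩
        · exact Or.inr h'
  | neg A ihA => exact ihA
  | all y A ihA =>
      by_cases h : y = x
      · simp only [FormN.subst, h, if_pos rfl]
        intro v hv
        simp only [FormN.fv] at hv ⊢
        subst h
        rcases hv with ⟨h1, h2⟩
        exact Or.inl ⟨⟨h1, h2⟩, h2⟩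
      · simp only [FormN.subst, if_neg h]
        intro v hv
        simp only [FormN.fv, Set.mem_diff, Set.mem_singleton_iff] at hv ⊢
        rcases hv with ⟨h1, h2⟩
        rcases ihA h1 with h' | h'
        · exact Or.inl ⟨⟨h'.1, h2⟩, h'.2⟩
        · exact Or.inr h'
  | ex y A ihA =>
      by_cases h : y = x
      · simp only [FormN.subst, h, if_pos rfl]
        intro v hv
        simp only [FormN.fv] at hv ⊢
        subst h
        rcases hv with ⟨h1, h2⟩
        exact Or.inl ⟨⟨h1, h2⟩, h2⟩
      · simp only [FormN.subst, if_neg h]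
        intro v hv
        simp only [FormN.fv, Set.mem_diff, Set.mem_singleton_iff] at hv ⊢
        rcases hv with ⟨h1, h2⟩
        rcases ihA h1 with h' | h'
        · exact Or.inl ⟨⟨h'.1, h2⟩, h'.2⟩
        · exact Or.inr h'

lemma FormI.fv_subst (x : ℕ) (s : Tm) : ∀ A : FormI P, (A.subst x s).fv ⊆ (A.fv \ {x}) ∪ s.fv := by
  intro A
  induction A with
  | atom p ts =>
      intro v hv
      simp only [FormI.subst, FormI.fv, Set.mem_setOf_eq, List.mem_map] at hv
      obtain ⟨t', ⟨t, ht, rfl⟩, hvt⟩ := hv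
      have := Tm.fv_subst x s t hvt
      simp only [Set.mem_union, Set.mem_diff, Set.mem_singleton_iff] at this ⊢
      rcases this with ⟨h1, h2⟩ | h
      · exact Or.inl ⟨⟨t, ht, h1⟩, h2⟩
      · exact Or.inr h
  | bot => simp [FormI.subst, FormI.fv]
  | imp A B ihA ihB =>
      intro v hv
      simp only [FormI.subst, FormI.fv, Set.mem_union] at hv ⊢
      rcases hv with h | h
      · rcases ihA h with h' | h'
        · exact Or.inl ⟨Or.inl h'.1, h'.2⟩
        · exact Or.inr h'
      · rcases ihB h with h' | h'
        · exact Or.inl ⟨Or.inr h'.1, h'.2⟩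
        · exact Or.inr h'
  | and A B ihA ihB =>
      intro v hv
      simp only [FormI.subst, FormI.fv, Set.mem_union] at hv ⊢
      rcases hv with h | h
      · rcases ihA h with h' | h'
        · exact Or.inl ⟨Or.inl h'.1, h'.2⟩
        · exact Or.inr h'
      · rcases ihB h with h' | h'
        · exact Or.inl ⟨Or.inr h'.1, h'.2⟩
        · exact Or.inr h'
  | or A B ihA ihB =>
      intro v hv
      simp only [FormI.subst, FormI.fv, Set.mem_union] at hv ⊢
      rcases hv with h | h
      · rcases ihA h with h' | h'
        · exact Or.inl ⟨Or.inl h'.1, h'.2⟩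
        · exact Or.inr h'
      · rcases ihB h with h' | h'
        · exact Or.inl ⟨Or.inr h'.1, h'.2⟩
        · exact Or.inr h'
  | all y A ihA =>
      by_cases h : y = x
      · simp only [FormI.subst, h, if_pos rfl]
        intro v hv
        simp only [FormI.fv] at hv ⊢
        subst h
        rcases hv with ⟨h1, h2⟩
        exact Or.inl ⟨⟨h1, h2⟩, h2⟩
      · simp only [FormI.subst, if_neg h]
        intro v hv
        simp only [FormI.fv, Set.mem_diff, Set.mem_singleton_iff] at hv ⊢
        rcases hv with ⟨h1, h2⟩
        rcases ihA h1 with h' | h'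
        · exact Or.inl ⟨⟨h'.1, h2⟩, h'.2⟩
        · exact Or.inr h'
  | ex y A ihA =>
      by_cases h : y = x
      · simp only [FormI.subst, h, if_pos rfl]
        intro v hv
        simp only [FormI.fv] at hv ⊢
        subst h
        rcases hv with ⟨h1, h2⟩
        exact Or.inl ⟨⟨h1, h2⟩, h2⟩
      · simp only [FormI.subst, if_neg h]
        intro v hv
        simp only [FormI.fv, Set.mem_diff, Set.mem_singleton_iff] at hv ⊢
        rcases hv with ⟨h1, h2⟩
        rcases ihA h1 with h' | h'
        · exact Or.inl ⟨⟨h'.1, h2⟩, h'.2⟩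
        · exact Or.inr h'

end Basic

/-! ### Section B: tau lemmas -/

section TauLemmas

lemma tau_subst (x : ℕ) (t : Tm) :
    ∀ A : FormN ℕ, tau (A.subst x t) = (tau A).subst x t ∧
      tau ((A.neg).subst x t) = (tau A.neg).subst x t := by
  intro A
  induction A with
  | atom p ts => constructor <;> simp [FormN.subst, tau, FormI.subst]
  | imp A B ihA ihB =>
      have hA1 := ihA.1; have hB1 := ihB.1
      have hB2 := ihB.2; simp only [FormN.subst] at hB2
      constructor
      · simp [FormN.subst, tau, FormI.subst, hA1, hB1]
      · simp [FormN.subst, tau, FormI.subst, hA1, hB2]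
  | and A B ihA ihB =>
      have hA1 := ihA.1; have hB1 := ihB.1
      have hA2 := ihA.2; simp only [FormN.subst] at hA2
      have hB2 := ihB.2; simp only [FormN.subst] at hB2
      constructor
      · simp [FormN.subst, tau, FormI.subst, hA1, hB1]
      · simp [FormN.subst, tau, FormI.subst, hA2, hB2]
  | or A B ihA ihB =>
      have hA1 := ihA.1; have hB1 := ihB.1
      have hA2 := ihA.2; simp only [FormN.subst] at hA2
      have hB2 := ihB.2; simp only [FormN.subst] at hB2
      constructor
      · simp [FormN.subst, tau, FormI.subst, hA1, hB1]
      · simp [FormN.subst, tau, FormI.subst, hA2, hB2]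
  | neg A ihA =>
      have hA1 := ihA.1
      have hA2 := ihA.2; simp only [FormN.subst] at hA2
      constructor
      · exact ihA.2
      · simp [FormN.subst, tau, hA1]
  | all y A ihA =>
      have hA1 := ihA.1
      have hA2 := ihA.2; simp only [FormN.subst] at hA2
      by_cases h : y = x
      · constructor
        · simp [FormN.subst, h, tau, FormI.subst]
        · simp [FormN.subst, h, tau, FormI.subst]
      · constructor
        · simp [FormN.subst, h, tau, FormI.subst, hA1]
        · simp [FormN.subst, h, tau, FormI.subst, hA2]
  | ex y A ihA =>
      have hA1 := ihA.1
      have hA2 := ihA.2; simp only [FormN.subst] at hA2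
      by_cases h : y = x
      · constructor
        · simp [FormN.subst, h, tau, FormI.subst]
        · simp [FormN.subst, h, tau, FormI.subst]
      · constructor
        · simp [FormN.subst, h, tau, FormI.subst, hA1]
        · simp [FormN.subst, h, tau, FormI.subst, hA2]

lemma tau_fv : ∀ A : FormN ℕ, (tau A).fv = A.fv ∧ (tau A.neg).fv = A.fv := by
  intro A
  induction A with
  | atom p ts => constructor <;> simp [tau, FormI.fv, FormN.fv]
  | imp A B ihA ihB =>
      constructor
      · simp [tau, FormI.fv, FormN.fv, ihA.1, ihB.1]
      · simp [tau, FormI.fv, FormN.fv, ihA.1, ihB.2]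
  | and A B ihA ihB =>
      constructor
      · simp [tau, FormI.fv, FormN.fv, ihA.1, ihB.1]
      · simp [tau, FormI.fv, FormN.fv, ihA.2, ihB.2]
  | or A B ihA ihB =>
      constructor
      · simp [tau, FormI.fv, FormN.fv, ihA.1, ihB.1]
      · simp [tau, FormI.fv, FormN.fv, ihA.2, ihB.2]
  | neg A ihA =>
      refine ⟨ihA.2, ?_⟩
      simpa [tau, FormN.fv] using ihA.1
  | all y A ihA =>
      constructor
      · simp [tau, FormI.fv, FormN.fv, ihA.1]
      · simp [tau, FormI.fv, FormN.fv, ihA.2]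
  | ex y A ihA =>
      constructor
      · simp [tau, FormI.fv, FormN.fv, ihA.1]
      · simp [tau, FormI.fv, FormN.fv, ihA.2]

lemma tau_bv : ∀ A : FormN ℕ, (tau A).bv = A.bv ∧ (tau A.neg).bv = A.bv := by
  intro A
  induction A with
  | atom p ts => constructor <;> simp [tau, FormI.bv, FormN.bv]
  | imp A B ihA ihB =>
      constructor
      · simp [tau, FormI.bv, FormN.bv, ihA.1, ihB.1]
      · simp [tau, FormI.bv, FormN.bv, ihA.1, ihB.2]
  | and A B ihA ihB =>
      constructor
      · simp [tau, FormI.bv, FormN.bv, ihA.1, ihB.1]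
      · simp [tau, FormI.bv, FormN.bv, ihA.2, ihB.2]
  | or A B ihA ihB =>
      constructor
      · simp [tau, FormI.bv, FormN.bv, ihA.1, ihB.1]
      · simp [tau, FormI.bv, FormN.bv, ihA.2, ihB.2]
  | neg A ihA =>
      refine ⟨ihA.2, ?_⟩
      simpa [tau, FormN.bv] using ihA.1
  | all y A ihA =>
      constructor
      · simp [tau, FormI.bv, FormN.bv, ihA.1]
      · simp [tau, FormI.bv, FormN.bv, ihA.2]
  | ex y A ihA =>
      constructor
      · simp [tau, FormI.bv, FormN.bv, ihA.1]
      · simp [tau, FormI.bv, FormN.bv, ihA.2]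

end TauLemmas

/-! ### Section C: finiteness and freshness machinery -/

section Fresh
variable {P : Type}

def Tm.fvF : Tm → Finset ℕ
  | .var y => {y}
  | .const _ => ∅

@[simp] lemma Tm.mem_fvF {v : ℕ} : ∀ {t : Tm}, v ∈ t.fvF ↔ v ∈ t.fv := by
  intro t; cases t <;> simp [Tm.fvF, Tm.fv]

def tmsFv : List Tm → Finset ℕ
  | [] => ∅
  | t :: l => t.fvF ∪ tmsFv l

@[simp] lemma mem_tmsFv {v : ℕ} : ∀ {l : List Tm}, v ∈ tmsFv l ↔ ∃ t ∈ l, v ∈ t.fv := by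
  intro l
  induction l with
  | nil => simp [tmsFv]
  | cons a l ih => simp [tmsFv, ih]

def FormN.fvF {P : Type} : FormN P → Finset ℕ
  | .atom _ ts => tmsFv ts
  | .imp A B => A.fvF ∪ B.fvF
  | .and A B => A.fvF ∪ B.fvF
  | .or A B => A.fvF ∪ B.fvF
  | .neg A => A.fvF
  | .all y A => A.fvF \ {y}
  | .ex y A => A.fvF \ {y}

lemma FormN.mem_fvF {v : ℕ} : ∀ {A : FormN P}, v ∈ A.fvF ↔ v ∈ A.fv := by
  intro A
  induction A with
  | atom p ts => simp [FormN.fvF, FormN.fv]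
  | imp A B ihA ihB => simp [FormN.fvF, FormN.fv, ihA, ihB]
  | and A B ihA ihB => simp [FormN.fvF, FormN.fv, ihA, ihB]
  | or A B ihA ihB => simp [FormN.fvF, FormN.fv, ihA, ihB]
  | neg A ihA => simp [FormN.fvF, FormN.fv, ihA]
  | all y A ihA => simp [FormN.fvF, FormN.fv, ihA]
  | ex y A ihA => simp [FormN.fvF, FormN.fv, ihA]

def FormN.bvF {P : Type} : FormN P → Finset ℕ
  | .atom _ _ => ∅
  | .imp A B => A.bvF ∪ B.bvF
  | .and A B => A.bvF ∪ B.bvF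
  | .or A B => A.bvF ∪ B.bvF
  | .neg A => A.bvF
  | .all y A => insert y A.bvF
  | .ex y A => insert y A.bvF

lemma FormN.mem_bvF {v : ℕ} : ∀ {A : FormN P}, v ∈ A.bvF ↔ v ∈ A.bv := by
  intro A
  induction A with
  | atom p ts => simp [FormN.bvF, FormN.bv]
  | imp A B ihA ihB => simp [FormN.bvF, FormN.bv, ihA, ihB]
  | and A B ihA ihB => simp [FormN.bvF, FormN.bv, ihA, ihB]
  | or A B ihA ihB => simp [FormN.bvF, FormN.bv, ihA, ihB]
  | neg A ihA => simp [FormN.bvF, FormN.bv, ihA]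
  | all y A ihA => simp [FormN.bvF, FormN.bv, ihA]
  | ex y A ihA => simp [FormN.bvF, FormN.bv, ihA]

def FormI.fvF {P : Type} : FormI P → Finset ℕ
  | .atom _ ts => tmsFv ts
  | .bot => ∅
  | .imp A B => A.fvF ∪ B.fvF
  | .and A B => A.fvF ∪ B.fvF
  | .or A B => A.fvF ∪ B.fvF
  | .all y A => A.fvF \ {y}
  | .ex y A => A.fvF \ {y}

lemma FormI.mem_fvF {v : ℕ} : ∀ {A : FormI P}, v ∈ A.fvF ↔ v ∈ A.fv := by
  intro A
  induction A with
  | atom p ts => simp [FormI.fvF, FormI.fv]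
  | bot => simp [FormI.fvF, FormI.fv]
  | imp A B ihA ihB => simp [FormI.fvF, FormI.fv, ihA, ihB]
  | and A B ihA ihB => simp [FormI.fvF, FormI.fv, ihA, ihB]
  | or A B ihA ihB => simp [FormI.fvF, FormI.fv, ihA, ihB]
  | all y A ihA => simp [FormI.fvF, FormI.fv, ihA]
  | ex y A ihA => simp [FormI.fvF, FormI.fv, ihA]

def FormI.bvF {P : Type} : FormI P → Finset ℕ
  | .atom _ _ => ∅
  | .bot => ∅
  | .imp A B => A.bvF ∪ B.bvF
  | .and A B => A.bvF ∪ B.bvF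
  | .or A B => A.bvF ∪ B.bvF
  | .all y A => insert y A.bvF
  | .ex y A => insert y A.bvF

lemma FormI.mem_bvF {v : ℕ} : ∀ {A : FormI P}, v ∈ A.bvF ↔ v ∈ A.bv := by
  intro A
  induction A with
  | atom p ts => simp [FormI.bvF, FormI.bv]
  | bot => simp [FormI.bvF, FormI.bv]
  | imp A B ihA ihB => simp [FormI.bvF, FormI.bv, ihA, ihB]
  | and A B ihA ihB => simp [FormI.bvF, FormI.bv, ihA, ihB]
  | or A B ihA ihB => simp [FormI.bvF, FormI.bv, ihA, ihB]
  | all y A ihA => simp [FormI.bvF, FormI.bv, ihA]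
  | ex y A ihA => simp [FormI.bvF, FormI.bv, ihA]

/-- a variable beyond everything in `s` -/
def freshVar (s : Finset ℕ) : ℕ := s.sup id + 1

lemma freshVar_not_mem (s : Finset ℕ) : freshVar s ∉ s := by
  intro h
  have := Finset.le_sup (f := id) h
  simp only [id, freshVar] at this h
  omega

lemma fresh3 (a b c : Finset ℕ) :
    freshVar (a ∪ b ∪ c) ∉ a ∧ freshVar (a ∪ b ∪ c) ∉ b ∧ freshVar (a ∪ b ∪ c) ∉ c := by
  have := freshVar_not_mem (a ∪ b ∪ c)
  simp only [Finset.mem_union] at this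
  tauto

lemma fresh4 (a b c d : Finset ℕ) :
    freshVar (a ∪ b ∪ c ∪ d) ∉ a ∧ freshVar (a ∪ b ∪ c ∪ d) ∉ b ∧
      freshVar (a ∪ b ∪ c ∪ d) ∉ c ∧ freshVar (a ∪ b ∪ c ∪ d) ∉ d := by
  have := freshVar_not_mem (a ∪ b ∪ c ∪ d)
  simp only [Finset.mem_union] at this
  tauto

lemma fresh5 (a b c d e : Finset ℕ) :
    freshVar (a ∪ b ∪ c ∪ d ∪ e) ∉ a ∧ freshVar (a ∪ b ∪ c ∪ d ∪ e) ∉ b ∧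
      freshVar (a ∪ b ∪ c ∪ d ∪ e) ∉ c ∧ freshVar (a ∪ b ∪ c ∪ d ∪ e) ∉ d ∧
      freshVar (a ∪ b ∪ c ∪ d ∪ e) ∉ e := by
  have := freshVar_not_mem (a ∪ b ∪ c ∪ d ∪ e)
  simp only [Finset.mem_union] at this
  tauto

/-- contexts with finitely many free variables overall -/
def FvS (Γ : Set (FormN P)) : Prop := ∃ V : Finset ℕ, ∀ G ∈ Γ, ∀ v ∈ FormN.fv G, v ∈ V

def FvSI (Γ : Set (FormI P)) : Prop := ∃ V : Finset ℕ, ∀ G ∈ Γ, ∀ v ∈ FormI.fv G, v ∈ V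

lemma FvS.empty : FvS (∅ : Set (FormN P)) := ⟨∅, by simp⟩

lemma FvSI.empty : FvSI (∅ : Set (FormI P)) := ⟨∅, by simp⟩

lemma FvS.insert {Γ : Set (FormN P)} (h : FvS Γ) (A : FormN P) : FvS (insert A Γ) := by
  obtain ⟨V, hV⟩ := h
  refine ⟨V ∪ A.fvF, ?_⟩
  rintro G (rfl | hG) v hv
  · simp [FormN.mem_fvF, hv]
  · simp [hV G hG v hv]

lemma FvSI.insert {Γ : Set (FormI P)} (h : FvSI Γ) (A : FormI P) : FvSI (insert A Γ) := by
  obtain ⟨V, hV⟩ := h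
  refine ⟨V ∪ A.fvF, ?_⟩
  rintro G (rfl | hG) v hv
  · simp [FormI.mem_fvF, hv]
  · simp [hV G hG v hv]

end Fresh

/-! ### Sizes -/

section Size
variable {P : Type}

def FormN.size {P : Type} : FormN P → ℕ
  | .atom _ _ => 1
  | .imp A B => A.size + B.size + 1
  | .and A B => A.size + B.size + 1
  | .or A B => A.size + B.size + 1
  | .neg A => A.size + 1
  | .all _ A => A.size + 1
  | .ex _ A => A.size + 1

def FormI.size {P : Type} : FormI P → ℕ
  | .atom _ _ => 1
  | .bot => 1
  | .imp A B => A.size + B.size + 1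
  | .and A B => A.size + B.size + 1
  | .or A B => A.size + B.size + 1
  | .all _ A => A.size + 1
  | .ex _ A => A.size + 1

lemma FormN.size_subst (x : ℕ) (t : Tm) : ∀ A : FormN P, (A.subst x t).size = A.size := by
  intro A
  induction A with
  | atom p ts => simp [FormN.subst, FormN.size]
  | imp A B ihA ihB => simp [FormN.subst, FormN.size, ihA, ihB]
  | and A B ihA ihB => simp [FormN.subst, FormN.size, ihA, ihB]
  | or A B ihA ihB => simp [FormN.subst, FormN.size, ihA, ihB]
  | neg A ihA => simp [FormN.subst, FormN.size, ihA]
  | all y A ihA => by_cases h : y = x <;> simp [FormN.subst, FormN.size, h, ihA]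
  | ex y A ihA => by_cases h : y = x <;> simp [FormN.subst, FormN.size, h, ihA]

lemma FormI.size_subst (x : ℕ) (t : Tm) : ∀ A : FormI P, (A.subst x t).size = A.size := by
  intro A
  induction A with
  | atom p ts => simp [FormI.subst, FormI.size]
  | bot => rfl
  | imp A B ihA ihB => simp [FormI.subst, FormI.size, ihA, ihB]
  | and A B ihA ihB => simp [FormI.subst, FormI.size, ihA, ihB]
  | or A B ihA ihB => simp [FormI.subst, FormI.size, ihA, ihB]
  | all y A ihA => by_cases h : y = x <;> simp [FormI.subst, FormI.size, h, ihA]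
  | ex y A ihA => by_cases h : y = x <;> simp [FormI.subst, FormI.size, h, ihA]

end Size

/-! ### Predicate–arity sets -/

section Predar

def unQ : ℕ ⊕ ℕ → ℕ := Sum.elim id id

def predarI : FormI (ℕ ⊕ ℕ) → Finset (ℕ × ℕ)
  | .atom q ts => {(unQ q, ts.length)}
  | .bot => ∅
  | .imp A B => predarI A ∪ predarI B
  | .and A B => predarI A ∪ predarI B
  | .or A B => predarI A ∪ predarI B
  | .all _ A => predarI A
  | .ex _ A => predarI A

def predarN : FormN ℕ → Finset (ℕ × ℕ)
  | .atom p ts => {(p, ts.length)}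
  | .imp A B => predarN A ∪ predarN B
  | .and A B => predarN A ∪ predarN B
  | .or A B => predarN A ∪ predarN B
  | .neg A => predarN A
  | .all _ A => predarN A
  | .ex _ A => predarN A

lemma predarI_subst (x : ℕ) (t : Tm) : ∀ A : FormI (ℕ ⊕ ℕ), predarI (A.subst x t) = predarI A := by
  intro A
  induction A with
  | atom q ts => simp [FormI.subst, predarI]
  | bot => rfl
  | imp A B ihA ihB => simp [FormI.subst, predarI, ihA, ihB]
  | and A B ihA ihB => simp [FormI.subst, predarI, ihA, ihB]
  | or A B ihA ihB => simp [FormI.subst, predarI, ihA, ihB]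
  | all y A ihA => by_cases h : y = x <;> simp [FormI.subst, predarI, h, ihA]
  | ex y A ihA => by_cases h : y = x <;> simp [FormI.subst, predarI, h, ihA]

lemma predarN_subst (x : ℕ) (t : Tm) : ∀ A : FormN ℕ, predarN (A.subst x t) = predarN A := by
  intro A
  induction A with
  | atom q ts => simp [FormN.subst, predarN]
  | imp A B ihA ihB => simp [FormN.subst, predarN, ihA, ihB]
  | and A B ihA ihB => simp [FormN.subst, predarN, ihA, ihB]
  | or A B ihA ihB => simp [FormN.subst, predarN, ihA, ihB]
  | neg A ihA => simp [FormN.subst, predarN, ihA]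
  | all y A ihA => by_cases h : y = x <;> simp [FormN.subst, predarN, h, ihA]
  | ex y A ihA => by_cases h : y = x <;> simp [FormN.subst, predarN, h, ihA]

lemma predar_tau : ∀ A : FormN ℕ, predarI (tau A) = predarN A ∧ predarI (tau A.neg) = predarN A := by
  intro A
  induction A with
  | atom p ts => constructor <;> simp [tau, predarI, predarN, unQ]
  | imp A B ihA ihB =>
      constructor
      · simp [tau, predarI, predarN, ihA.1, ihB.1]
      · simp [tau, predarI, predarN, ihA.1, ihB.2]
  | and A B ihA ihB =>
      constructor
      · simp [tau, predarI, predarN, ihA.1, ihB.1]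
      · simp [tau, predarI, predarN, ihA.2, ihB.2]
  | or A B ihA ihB =>
      constructor
      · simp [tau, predarI, predarN, ihA.1, ihB.1]
      · simp [tau, predarI, predarN, ihA.2, ihB.2]
  | neg A ihA =>
      refine ⟨ihA.2, ?_⟩
      simpa [tau, predarN] using ihA.1
  | all y A ihA =>
      constructor
      · simp [tau, predarI, predarN, ihA.1]
      · simp [tau, predarI, predarN, ihA.2]
  | ex y A ihA =>
      constructor
      · simp [tau, predarI, predarN, ihA.1]
      · simp [tau, predarI, predarN, ihA.2]

end Predar

/-! ### Section D: N4 helper derivations -/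

section N4Helpers

/-- cut -/
lemma N4.cut {P : Type} {eqp : P} {Γ : Set (FormN P)} {X C : FormN P}
    (h1 : N4 eqp (insert X Γ) C) (h2 : N4 eqp Γ X) : N4 eqp Γ C :=
  N4.impE (N4.impI h1) h2

def c0 : Tm := .const 0

def eqcc : FormN ℕ := eqN 0 c0 c0

def listConj (L : List (FormN ℕ)) : FormN ℕ := L.foldr .and eqcc

lemma listConj_mem {Γ : Set (FormN ℕ)} {L : List (FormN ℕ)} {X : FormN ℕ}
    (hX : X ∈ L) (h : N4 0 Γ (listConj L)) : N4 0 Γ X := by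
  induction L with
  | nil => simp at hX
  | cons A L ih =>
      rcases List.mem_cons.mp hX with rfl | hX
      · exact N4.andE1 h
      · exact ih hX (N4.andE2 h)

noncomputable def sConj (S : Finset (ℕ × ℕ)) : List (FormN ℕ) :=
  S.toList.map (fun pk =>
    FormN.and (.atom pk.1 (List.replicate pk.2 c0)) (.neg (.atom pk.1 (List.replicate pk.2 c0))))

noncomputable def Z (S : Finset (ℕ × ℕ)) (u : ℕ) : FormN ℕ :=
  .and (.all u (eqN 0 (.var u) c0)) (listConj (sConj S))

lemma fv_eqcc : FormN.fv eqcc = ∅ := by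
  simp [eqcc, eqN, FormN.fv, c0, Tm.fv]

lemma fv_Z {S : Finset (ℕ × ℕ)} {u : ℕ} : FormN.fv (Z S u) = ∅ := by
  have h1 : FormN.fv (FormN.all u (eqN 0 (.var u) c0)) = ∅ := by
    have hb : FormN.fv (eqN 0 (Tm.var u) c0) = {u} := by
      ext v
      simp [eqN, FormN.fv, Tm.fv, c0]
    show FormN.fv (eqN 0 (Tm.var u) c0) \ {u} = ∅
    rw [hb]
    simp
  have h2 : ∀ L : List (FormN ℕ), (∀ X ∈ L, FormN.fv X = ∅) → FormN.fv (listConj L) = ∅ := by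
    intro L
    induction L with
    | nil => intro _; simpa [listConj] using fv_eqcc
    | cons A L ih =>
        intro h
        have : FormN.fv (listConj (A :: L)) = FormN.fv A ∪ FormN.fv (listConj L) := rfl
        rw [this, h A (by simp), ih (fun X hX => h X (by simp [hX]))]
        simp
  have h3 : ∀ X ∈ sConj S, FormN.fv X = ∅ := by
    intro X hX
    simp only [sConj, List.mem_map] at hX
    obtain ⟨pk, _, rfl⟩ := hX
    have : ∀ k, (∀ t ∈ List.replicate k c0, Tm.fv t = ∅) := by
      intro k t ht
      have := List.eq_of_mem_replicate ht
      simp [this, c0]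
    ext v
    simp only [FormN.fv, Set.mem_union, Set.mem_setOf_eq]
    constructor
    · rintro (⟨t, ht, hv⟩ | ⟨t, ht, hv⟩) <;>
        · rw [this _ t ht] at hv; exact hv.elim
    · intro h; exact h.elim
  show FormN.fv _ ∪ FormN.fv _ = ∅
  rw [h1, h2 _ h3]
  simp

lemma basic_atom {p : ℕ} {ts : List Tm} : IsBasicN (FormN.atom p ts) := trivial

lemma basic_natom {p : ℕ} {ts : List Tm} : IsBasicN (FormN.neg (FormN.atom p ts)) := trivial

lemma freeFor_var {P : Type} {y : ℕ} {A : FormN P} (h : y ∉ A.bv) : FreeForN (Tm.var y) A := by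
  intro v hv
  simp only [Tm.fv_var, Set.mem_singleton_iff] at hv
  subst hv
  exact h

lemma freeFor_of_bv_empty {P : Type} {t : Tm} {A : FormN P} (h : A.bv = ∅) : FreeForN t A := by
  intro v _ hv
  rw [h] at hv
  exact hv

lemma Z_eq_any {Γ : Set (FormN ℕ)} {S : Finset (ℕ × ℕ)} {u : ℕ}
    (hZ : N4 0 Γ (Z S u)) (t : Tm) : N4 0 Γ (eqN 0 t c0) := by
  have h1 : N4 0 Γ (.all u (eqN 0 (.var u) c0)) := N4.andE1 hZ
  have h2 := N4.allE (A := eqN 0 (.var u) c0) (x := u) (t := t) h1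
    (freeFor_of_bv_empty (by simp [eqN, FormN.bv]))
  have e : (eqN 0 (.var u) c0).subst u t = eqN 0 t c0 := by
    simp [eqN, FormN.subst, Tm.subst, c0]
  rwa [e] at h2

lemma eq_symm {Γ : Set (FormN ℕ)} {a b : Tm}
    (h : N4 0 Γ (eqN 0 a b)) : N4 0 Γ (eqN 0 b a) := by
  set z := freshVar a.fvF with hz
  have hza : z ∉ a.fv := by
    intro hmem
    exact freshVar_not_mem a.fvF (Tm.mem_fvF.mpr hmem)
  have e1 : (eqN 0 (.var z) a).subst z a = eqN 0 a a := by
    simp only [eqN, FormN.subst, List.map_cons, List.map_nil, Tm.subst_not_mem hza]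
    simp [Tm.subst]
  have e2 : (eqN 0 (.var z) a).subst z b = eqN 0 b a := by
    simp only [eqN, FormN.subst, List.map_cons, List.map_nil, Tm.subst_not_mem hza]
    simp [Tm.subst]
  have := N4.eqEr (A := eqN 0 (.var z) a) (x := z) (t₁ := a) (t₂ := b) h
    (by rw [e1]; exact N4.eqIr) (by exact basic_atom)
  rwa [e2] at this

lemma Z_eq_any' {Γ : Set (FormN ℕ)} {S : Finset (ℕ × ℕ)} {u : ℕ}
    (hZ : N4 0 Γ (Z S u)) (t : Tm) : N4 0 Γ (eqN 0 c0 t) :=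
  eq_symm (Z_eq_any hZ t)

lemma transport_gen {Γ : Set (FormN ℕ)} {S : Finset (ℕ × ℕ)} {u : ℕ}
    (mk : List Tm → FormN ℕ) (hbasic : ∀ l, IsBasicN (mk l))
    (hsub : ∀ l x t, (mk l).subst x t = mk (l.map (Tm.subst x t)))
    (hZ : N4 0 Γ (Z S u)) :
    ∀ (l₂ l₁ : List Tm), N4 0 Γ (mk (l₁ ++ List.replicate l₂.length c0)) →
      N4 0 Γ (mk (l₁ ++ l₂)) := by
  intro l₂
  induction l₂ with
  | nil => intro l₁ h; simpa using h
  | cons t l₂' ih =>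
      intro l₁ h
      set z := freshVar (tmsFv l₁ ∪ t.fvF) with hzdef
      have hzl : ∀ s ∈ l₁, z ∉ s.fv := by
        intro s hs hv
        exact freshVar_not_mem _ (Finset.mem_union.mpr (Or.inl (mem_tmsFv.mpr ⟨s, hs, hv⟩)))
      have hzt : z ∉ t.fv := by
        intro hv
        exact freshVar_not_mem _ (Finset.mem_union.mpr (Or.inr (Tm.mem_fvF.mpr hv)))
      have hr : ∀ (w : Tm), (List.replicate l₂'.length c0).map (Tm.subst z w) =
          List.replicate l₂'.length c0 := by
        intro w
        rw [List.map_replicate]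
        simp [c0, Tm.subst]
      have e1 : (mk (l₁ ++ .var z :: List.replicate l₂'.length c0)).subst z c0 =
          mk (l₁ ++ c0 :: List.replicate l₂'.length c0) := by
        rw [hsub]
        congr 1
        rw [List.map_append, List.map_cons, List.map_subst_not_mem hzl, hr]
        simp [Tm.subst]
      have e2 : (mk (l₁ ++ .var z :: List.replicate l₂'.length c0)).subst z t =
          mk (l₁ ++ t :: List.replicate l₂'.length c0) := by
        rw [hsub]
        congr 1
        rw [List.map_append, List.map_cons, List.map_subst_not_mem hzl, hr]
        simp [Tm.subst]
      have h' : N4 0 Γ (mk (l₁ ++ c0 :: List.replicate l₂'.length c0)) := by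
        have : List.replicate (t :: l₂').length c0 = c0 :: List.replicate l₂'.length c0 := by
          simp [List.replicate]
        rwa [this] at h
      have step := N4.eqEr (A := mk (l₁ ++ .var z :: List.replicate l₂'.length c0))
        (x := z) (t₁ := c0) (t₂ := t) (Z_eq_any' hZ t) (by rw [e1]; exact h') (hbasic _)
      rw [e2] at step
      have step' : N4 0 Γ (mk ((l₁ ++ [t]) ++ List.replicate l₂'.length c0)) := by
        rwa [List.append_assoc, List.singleton_append]
      have := ih (l₁ ++ [t]) step'
      rwa [List.append_assoc, List.singleton_append] at this

lemma Z_pair {Γ : Set (FormN ℕ)} {S : Finset (ℕ × ℕ)} {u : ℕ} {p k : ℕ}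
    (hZ : N4 0 Γ (Z S u)) (hmem : (p, k) ∈ S) :
    N4 0 Γ (.and (.atom p (List.replicate k c0)) (.neg (.atom p (List.replicate k c0)))) := by
  apply listConj_mem (L := sConj S)
  · simp only [sConj, List.mem_map]
    exact ⟨(p, k), Finset.mem_toList.mpr hmem, rfl⟩
  · exact N4.andE2 hZ

lemma Z_atom {Γ : Set (FormN ℕ)} {S : Finset (ℕ × ℕ)} {u : ℕ} {p : ℕ} {ts : List Tm}
    (hZ : N4 0 Γ (Z S u)) (hmem : (p, ts.length) ∈ S) : N4 0 Γ (.atom p ts) := by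
  have := transport_gen (mk := fun l => FormN.atom p l) (fun l => basic_atom)
    (fun l x t => rfl) hZ ts []
  simp only [List.nil_append] at this
  exact this (N4.andE1 (Z_pair hZ hmem))

lemma Z_natom {Γ : Set (FormN ℕ)} {S : Finset (ℕ × ℕ)} {u : ℕ} {p : ℕ} {ts : List Tm}
    (hZ : N4 0 Γ (Z S u)) (hmem : (p, ts.length) ∈ S) : N4 0 Γ (.neg (.atom p ts)) := by
  have := transport_gen (mk := fun l => FormN.neg (FormN.atom p l)) (fun l => basic_natom)
    (fun l x t => rfl) hZ ts []
  simp only [List.nil_append] at this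
  exact this (N4.andE2 (Z_pair hZ hmem))

end N4Helpers

/-! ### Section E: the backward translation ν and the explosion lemma -/

section Nu

noncomputable def nu (S : Finset (ℕ × ℕ)) (u : ℕ) : FormI (ℕ ⊕ ℕ) → FormN ℕ
  | .atom (.inl p) ts => if (p, ts.length) ∈ S then .atom p ts else eqcc
  | .atom (.inr p) ts => if (p, ts.length) ∈ S then .neg (.atom p ts) else eqcc
  | .bot => Z S u
  | .imp A B => .imp (nu S u A) (nu S u B)
  | .and A B => .and (nu S u A) (nu S u B)
  | .or A B => .or (nu S u A) (nu S u B)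
  | .all x A => .all x (nu S u A)
  | .ex x A => .ex x (nu S u A)

variable {S : Finset (ℕ × ℕ)} {u : ℕ}

lemma subst_eqcc (x : ℕ) (t : Tm) : eqcc.subst x t = eqcc :=
  FormN.subst_not_mem (by rw [fv_eqcc]; exact fun h => h)

lemma subst_Z (x : ℕ) (t : Tm) : (Z S u).subst x t = Z S u :=
  FormN.subst_not_mem (by rw [fv_Z]; exact fun h => h)

lemma nu_subst (x : ℕ) (t : Tm) : ∀ A : FormI (ℕ ⊕ ℕ),
    (nu S u A).subst x t = nu S u (A.subst x t) := by
  intro A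
  induction A with
  | atom q ts =>
      cases q with
      | inl p =>
          by_cases h : (p, ts.length) ∈ S
          · simp [nu, h, FormI.subst, FormN.subst]
          · simp [nu, h, FormI.subst, subst_eqcc]
      | inr p =>
          by_cases h : (p, ts.length) ∈ S
          · simp [nu, h, FormI.subst, FormN.subst]
          · simp [nu, h, FormI.subst, subst_eqcc]
  | bot => simp [nu, FormI.subst, subst_Z]
  | imp A B ihA ihB => simp [nu, FormI.subst, FormN.subst, ihA, ihB]
  | and A B ihA ihB => simp [nu, FormI.subst, FormN.subst, ihA, ihB]
  | or A B ihA ihB => simp [nu, FormI.subst, FormN.subst, ihA, ihB]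
  | all y A ihA => by_cases h : y = x <;> simp [nu, FormI.subst, FormN.subst, h, ihA]
  | ex y A ihA => by_cases h : y = x <;> simp [nu, FormI.subst, FormN.subst, h, ihA]

lemma nu_fv : ∀ A : FormI (ℕ ⊕ ℕ), FormN.fv (nu S u A) ⊆ FormI.fv A := by
  intro A
  induction A with
  | atom q ts =>
      cases q with
      | inl p =>
          by_cases h : (p, ts.length) ∈ S
          · simp only [nu, if_pos h]
            intro v hv
            simpa [FormN.fv, FormI.fv] using hv
          · simp only [nu, if_neg h]
            rw [fv_eqcc]
            exact Set.empty_subset _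
      | inr p =>
          by_cases h : (p, ts.length) ∈ S
          · simp only [nu, if_pos h]
            intro v hv
            simpa [FormN.fv, FormI.fv] using hv
          · simp only [nu, if_neg h]
            rw [fv_eqcc]
            exact Set.empty_subset _
  | bot => rw [show nu S u .bot = Z S u from rfl, fv_Z]; exact Set.empty_subset _
  | imp A B ihA ihB =>
      intro v hv
      rcases hv with h | h
      · exact Or.inl (ihA h)
      · exact Or.inr (ihB h)
  | and A B ihA ihB =>
      intro v hv
      rcases hv with h | h
      · exact Or.inl (ihA h)
      · exact Or.inr (ihB h)
  | or A B ihA ihB =>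
      intro v hv
      rcases hv with h | h
      · exact Or.inl (ihA h)
      · exact Or.inr (ihB h)
  | all y A ihA =>
      intro v hv
      exact ⟨ihA hv.1, hv.2⟩
  | ex y A ihA =>
      intro v hv
      exact ⟨ihA hv.1, hv.2⟩

lemma bv_Z : FormN.bv (Z S u) = {u} := by
  have h2 : ∀ L : List (FormN ℕ), (∀ X ∈ L, FormN.bv X = ∅) → FormN.bv (listConj L) = ∅ := by
    intro L
    induction L with
    | nil => intro _; simp [listConj, eqcc, eqN, FormN.bv]
    | cons A L ih =>
        intro h
        show FormN.bv A ∪ FormN.bv (listConj L) = ∅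
        rw [h A (by simp), ih (fun X hX => h X (by simp [hX]))]
        simp
  have h3 : ∀ X ∈ sConj S, FormN.bv X = ∅ := by
    intro X hX
    simp only [sConj, List.mem_map] at hX
    obtain ⟨pk, _, rfl⟩ := hX
    show FormN.bv _ ∪ FormN.bv _ = ∅
    simp [FormN.bv]
  show FormN.bv (FormN.all u (eqN 0 (.var u) c0)) ∪ FormN.bv (listConj (sConj S)) = {u}
  rw [h2 _ h3]
  show insert u (FormN.bv (eqN 0 (.var u) c0)) ∪ ∅ = {u}
  simp [eqN, FormN.bv]

lemma nu_bv : ∀ A : FormI (ℕ ⊕ ℕ), FormN.bv (nu S u A) ⊆ FormI.bv A ∪ {u} := by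
  intro A
  induction A with
  | atom q ts =>
      cases q with
      | inl p =>
          by_cases h : (p, ts.length) ∈ S <;>
            simp [nu, h, FormN.bv, FormI.bv, eqcc, eqN]
      | inr p =>
          by_cases h : (p, ts.length) ∈ S <;>
            simp [nu, h, FormN.bv, FormI.bv, eqcc, eqN]
  | bot =>
      rw [show nu S u .bot = Z S u from rfl, bv_Z]
      intro v hv
      exact Or.inr hv
  | imp A B ihA ihB =>
      intro v hv
      rcases hv with h | h
      · rcases ihA h with h' | h'
        · exact Or.inl (Or.inl h')
        · exact Or.inr h'
      · rcases ihB h with h' | h'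
        · exact Or.inl (Or.inr h')
        · exact Or.inr h'
  | and A B ihA ihB =>
      intro v hv
      rcases hv with h | h
      · rcases ihA h with h' | h'
        · exact Or.inl (Or.inl h')
        · exact Or.inr h'
      · rcases ihB h with h' | h'
        · exact Or.inl (Or.inr h')
        · exact Or.inr h'
  | or A B ihA ihB =>
      intro v hv
      rcases hv with h | h
      · rcases ihA h with h' | h'
        · exact Or.inl (Or.inl h')
        · exact Or.inr h'
      · rcases ihB h with h' | h'
        · exact Or.inl (Or.inr h')
        · exact Or.inr h'
  | all y A ihA =>
      intro v hv
      rcases hv with rfl | hv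
      · exact Or.inl (Or.inl rfl)
      · rcases ihA hv with h' | h'
        · exact Or.inl (Or.inr h')
        · exact Or.inr h'
  | ex y A ihA =>
      intro v hv
      rcases hv with rfl | hv
      · exact Or.inl (Or.inl rfl)
      · rcases ihA hv with h' | h'
        · exact Or.inl (Or.inr h')
        · exact Or.inr h'

@[simp] lemma nu_bot : nu S u .bot = Z S u := rfl
@[simp] lemma nu_imp {A B : FormI (ℕ ⊕ ℕ)} : nu S u (.imp A B) = .imp (nu S u A) (nu S u B) := rfl
@[simp] lemma nu_and {A B : FormI (ℕ ⊕ ℕ)} : nu S u (.and A B) = .and (nu S u A) (nu S u B) := rfl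
@[simp] lemma nu_or {A B : FormI (ℕ ⊕ ℕ)} : nu S u (.or A B) = .or (nu S u A) (nu S u B) := rfl
@[simp] lemma nu_all {x : ℕ} {A : FormI (ℕ ⊕ ℕ)} : nu S u (.all x A) = .all x (nu S u A) := rfl
@[simp] lemma nu_ex {x : ℕ} {A : FormI (ℕ ⊕ ℕ)} : nu S u (.ex x A) = .ex x (nu S u A) := rfl
lemma nu_atom_inl {p : ℕ} {ts : List Tm} (h : (p, ts.length) ∈ S) :
    nu S u (.atom (.inl p) ts) = .atom p ts := by simp [nu, h]
lemma nu_atom_inr {p : ℕ} {ts : List Tm} (h : (p, ts.length) ∈ S) :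
    nu S u (.atom (.inr p) ts) = .neg (.atom p ts) := by simp [nu, h]
lemma nu_atom_inl' {p : ℕ} {ts : List Tm} (h : (p, ts.length) ∉ S) :
    nu S u (.atom (.inl p) ts) = eqcc := by simp [nu, h]
lemma nu_atom_inr' {p : ℕ} {ts : List Tm} (h : (p, ts.length) ∉ S) :
    nu S u (.atom (.inr p) ts) = eqcc := by simp [nu, h]

lemma FvS_nu_image {Γ : Set (FormI (ℕ ⊕ ℕ))} (h : FvSI Γ) : FvS ((nu S u) '' Γ) := by
  obtain ⟨V, hV⟩ := h
  refine ⟨V, ?_⟩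
  rintro G ⟨G₀, hG₀, rfl⟩ v hv
  exact hV G₀ hG₀ v (nu_fv _ hv)

end Nu

/-! ### Section F: from Z everything in the fragment follows -/

section BotEntails

variable {S : Finset (ℕ × ℕ)} {u : ℕ}

lemma size_posI {P : Type} : ∀ A : FormI P, 1 ≤ A.size := by
  intro A; cases A <;> simp [FormI.size] <;> omega

lemma bot_entails : ∀ (n : ℕ) (B : FormI (ℕ ⊕ ℕ)), B.size ≤ n →
    ∀ Γ : Set (FormN ℕ), FvS Γ → Z S u ∈ Γ → predarI B ⊆ S → N4 0 Γ (nu S u B) := by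
  intro n
  induction n with
  | zero => intro B hB; have := size_posI B; omega
  | succ n ih =>
      intro B hB Γ hFv hZ hS
      have dZ : N4 0 Γ (Z S u) := N4.hyp hZ
      cases B with
      | atom q ts =>
          cases q with
          | inl p =>
              have hm : (p, ts.length) ∈ S := hS (by simp [predarI, unQ])
              show N4 0 Γ (nu S u (.atom (.inl p) ts))
              rw [show nu S u (.atom (.inl p) ts) = .atom p ts from by simp [nu, hm]]
              exact Z_atom dZ hm
          | inr p =>
              have hm : (p, ts.length) ∈ S := hS (by simp [predarI, unQ])
              rw [show nu S u (.atom (.inr p) ts) = .neg (.atom p ts) from by simp [nu, hm]]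
              exact Z_natom dZ hm
      | bot => exact dZ
      | imp B₁ B₂ =>
          show N4 0 Γ ((nu S u B₁).imp (nu S u B₂))
          apply N4.impI
          apply ih B₂ (by simp [FormI.size] at hB ⊢; omega) _
            (hFv.insert _) (Set.mem_insert_of_mem _ hZ)
          intro pk hpk
          exact hS (by simp [predarI]; exact Or.inr hpk)
      | and B₁ B₂ =>
          refine N4.andI (ih B₁ ?_ _ hFv hZ ?_) (ih B₂ ?_ _ hFv hZ ?_)
          · simp [FormI.size] at hB ⊢; omega
          · intro pk hpk; exact hS (by simp [predarI]; exact Or.inl hpk)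
          · simp [FormI.size] at hB ⊢; omega
          · intro pk hpk; exact hS (by simp [predarI]; exact Or.inr hpk)
      | or B₁ B₂ =>
          apply N4.orI1
          refine ih B₁ ?_ _ hFv hZ ?_
          · simp [FormI.size] at hB ⊢; omega
          · intro pk hpk; exact hS (by simp [predarI]; exact Or.inl hpk)
      | all x B =>
          obtain ⟨V, hV⟩ := hFv
          set y := freshVar (V ∪ (nu S u B).fvF) with hy
          show N4 0 Γ (.all x (nu S u B))
          apply N4.allI (y := y)
          · rw [nu_subst]
            apply ih (B.subst x (.var y)) (by rw [FormI.size_subst]; simp [FormI.size] at hB; omega)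
              _ ⟨V, hV⟩ hZ
            rw [predarI_subst]
            intro pk hpk; exact hS hpk
          · intro G hG hvy
            exact freshVar_not_mem _ (Finset.mem_union.mpr (Or.inl (hV G hG y hvy)))
          · right
            intro hvy
            exact freshVar_not_mem _ (Finset.mem_union.mpr (Or.inr (FormN.mem_fvF.mpr hvy)))
      | ex x B =>
          set y := freshVar ((nu S u B).bvF) with hy
          show N4 0 Γ (.ex x (nu S u B))
          apply N4.exI (t := .var y)
          · rw [nu_subst]
            apply ih (B.subst x (.var y)) (by rw [FormI.size_subst]; simp [FormI.size] at hB; omega)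
              _ hFv hZ
            rw [predarI_subst]
            intro pk hpk; exact hS hpk
          · intro v hv hbv
            simp only [Tm.fv_var, Set.mem_singleton_iff] at hv
            subst hv
            exact freshVar_not_mem _ (FormN.mem_bvF.mpr hbv)

end BotEntails

/-! ### Section G: main backward induction -/

section Backward

lemma backward_main {Γ : Set (FormI (ℕ ⊕ ℕ))} {B : FormI (ℕ ⊕ ℕ)}
    (h : IntP (Sum.inl 0) Γ B) :
    FvSI Γ → ∃ S₀ : Finset (ℕ × ℕ), ∃ V₀ : Finset ℕ, ∀ S : Finset (ℕ × ℕ), S₀ ⊆ S →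
      ∀ u : ℕ, u ∉ V₀ → N4 0 ((nu S u) '' Γ) (nu S u B) := by
  induction h with
  | @hyp Γ A h =>
      intro _
      exact ⟨∅, ∅, fun S _ u _ => N4.hyp (Set.mem_image_of_mem _ h)⟩
  | @botE Γ A h ih =>
      intro hFv
      obtain ⟨S₁, V₁, H₁⟩ := ih hFv
      refine ⟨S₁ ∪ predarI A, V₁, ?_⟩
      intro S hS u hu
      have dZ : N4 0 ((nu S u) '' Γ) (Z S u) := H₁ S (fun x hx => hS (by simp [hx])) u hu
      have hb := bot_entails (S := S) (u := u) A.size A le_rfl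
        (insert (Z S u) ((nu S u) '' Γ)) ((FvS_nu_image hFv).insert _)
        (Set.mem_insert _ _) (fun pk hpk => hS (by simp [hpk]))
      exact N4.cut hb dZ
  | @andI Γ A B h1 h2 ih1 ih2 =>
      intro hFv
      obtain ⟨S₁, V₁, H₁⟩ := ih1 hFv
      obtain ⟨S₂, V₂, H₂⟩ := ih2 hFv
      refine ⟨S₁ ∪ S₂, V₁ ∪ V₂, ?_⟩
      intro S hS u hu
      simp only [Finset.union_subset_iff] at hS
      simp only [Finset.mem_union] at hu
      push_neg at hu
      exact N4.andI (H₁ S hS.1 u hu.1) (H₂ S hS.2 u hu.2)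
  | @andE1 Γ A B h ih =>
      intro hFv
      obtain ⟨S₁, V₁, H₁⟩ := ih hFv
      exact ⟨S₁, V₁, fun S hS u hu => N4.andE1 (H₁ S hS u hu)⟩
  | @andE2 Γ A B h ih =>
      intro hFv
      obtain ⟨S₁, V₁, H₁⟩ := ih hFv
      exact ⟨S₁, V₁, fun S hS u hu => N4.andE2 (H₁ S hS u hu)⟩
  | @orI1 Γ A B h ih =>
      intro hFv
      obtain ⟨S₁, V₁, H₁⟩ := ih hFv
      exact ⟨S₁, V₁, fun S hS u hu => N4.orI1 (H₁ S hS u hu)⟩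
  | @orI2 Γ A B h ih =>
      intro hFv
      obtain ⟨S₁, V₁, H₁⟩ := ih hFv
      exact ⟨S₁, V₁, fun S hS u hu => N4.orI2 (H₁ S hS u hu)⟩
  | @orE Γ A B C h h1 h2 ih ih1 ih2 =>
      intro hFv
      obtain ⟨S₁, V₁, H₁⟩ := ih hFv
      obtain ⟨S₂, V₂, H₂⟩ := ih1 (hFv.insert _)
      obtain ⟨S₃, V₃, H₃⟩ := ih2 (hFv.insert _)
      refine ⟨S₁ ∪ S₂ ∪ S₃, V₁ ∪ V₂ ∪ V₃, ?_⟩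
      intro S hS u hu
      simp only [Finset.union_subset_iff] at hS
      simp only [Finset.mem_union] at hu
      push_neg at hu
      apply N4.orE (H₁ S hS.1.1 u hu.1.1)
      · have := H₂ S hS.1.2 u hu.1.2
        rwa [Set.image_insert_eq] at this
      · have := H₃ S hS.2 u hu.2
        rwa [Set.image_insert_eq] at this
  | @impI Γ A B h ih =>
      intro hFv
      obtain ⟨S₁, V₁, H₁⟩ := ih (hFv.insert _)
      refine ⟨S₁, V₁, ?_⟩
      intro S hS u hu
      apply N4.impI
      have := H₁ S hS u hu
      rwa [Set.image_insert_eq] at this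
  | @impE Γ A B h1 h2 ih1 ih2 =>
      intro hFv
      obtain ⟨S₁, V₁, H₁⟩ := ih1 hFv
      obtain ⟨S₂, V₂, H₂⟩ := ih2 hFv
      refine ⟨S₁ ∪ S₂, V₁ ∪ V₂, ?_⟩
      intro S hS u hu
      simp only [Finset.union_subset_iff] at hS
      simp only [Finset.mem_union] at hu
      push_neg at hu
      exact N4.impE (H₁ S hS.1 u hu.1) (H₂ S hS.2 u hu.2)
  | @allI Γ A x y h hyΓ hyA ih =>
      intro hFv
      obtain ⟨S₁, V₁, H₁⟩ := ih hFv
      refine ⟨S₁, V₁, ?_⟩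
      intro S hS u hu
      apply N4.allI (y := y)
      · have := H₁ S hS u hu
        rwa [← nu_subst] at this
      · rintro G ⟨G₀, hG₀, rfl⟩ hv
        exact hyΓ G₀ hG₀ (nu_fv _ hv)
      · rcases hyA with h' | h'
        · exact Or.inl h'
        · exact Or.inr (fun hv => h' (nu_fv _ hv))
  | @allE Γ A x t h hfree ih =>
      intro hFv
      obtain ⟨S₁, V₁, H₁⟩ := ih hFv
      refine ⟨S₁, V₁ ∪ t.fvF, ?_⟩
      intro S hS u hu
      simp only [Finset.mem_union] at hu
      push_neg at hu
      rw [← nu_subst]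
      apply N4.allE (H₁ S hS u hu.1)
      intro v hv hbv
      rcases nu_bv A hbv with h' | h'
      · exact hfree v hv h'
      · simp only [Set.mem_singleton_iff] at h'
        subst h'
        exact hu.2 (Tm.mem_fvF.mpr hv)
  | @exI Γ A x t h hfree ih =>
      intro hFv
      obtain ⟨S₁, V₁, H₁⟩ := ih hFv
      refine ⟨S₁, V₁ ∪ t.fvF, ?_⟩
      intro S hS u hu
      simp only [Finset.mem_union] at hu
      push_neg at hu
      apply N4.exI (t := t)
      · have := H₁ S hS u hu.1
        rwa [← nu_subst] at this
      · intro v hv hbv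
        rcases nu_bv A hbv with h' | h'
        · exact hfree v hv h'
        · simp only [Set.mem_singleton_iff] at h'
          subst h'
          exact hu.2 (Tm.mem_fvF.mpr hv)
  | @exE Γ A C x y h h1 hyC hyΓ hyA ih ih1 =>
      intro hFv
      obtain ⟨S₁, V₁, H₁⟩ := ih hFv
      obtain ⟨S₂, V₂, H₂⟩ := ih1 (hFv.insert _)
      refine ⟨S₁ ∪ S₂, V₁ ∪ V₂, ?_⟩
      intro S hS u hu
      simp only [Finset.union_subset_iff] at hS
      simp only [Finset.mem_union] at hu
      push_neg at hu
      apply N4.exE (A := nu S u A) (x := x) (y := y) (H₁ S hS.1 u hu.1)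
      · have := H₂ S hS.2 u hu.2
        rwa [Set.image_insert_eq, ← nu_subst] at this
      · exact fun hv => hyC (nu_fv _ hv)
      · rintro G ⟨G₀, hG₀, rfl⟩ hv
        exact hyΓ G₀ hG₀ (nu_fv _ hv)
      · rcases hyA with h' | h'
        · exact Or.inl h'
        · exact Or.inr (fun hv => h' (nu_fv _ hv))
  | @eqIr Γ t =>
      intro _
      refine ⟨{(0, 2)}, ∅, ?_⟩
      intro S hS u _
      have hm : ((0 : ℕ), (2 : ℕ)) ∈ S := hS (by simp)
      have : nu S u (eqI (Sum.inl 0) t t) = eqN 0 t t := by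
        rw [show eqI (Sum.inl (0:ℕ)) t t = FormI.atom (Sum.inl 0) [t, t] from rfl]
        rw [nu_atom_inl (by simpa using hm)]
        rfl
      rw [this]
      exact N4.eqIr
  | @eqEr Γ A x t₁ t₂ h1 h2 hatom ih1 ih2 =>
      intro hFv
      obtain ⟨S₁, V₁, H₁⟩ := ih1 hFv
      obtain ⟨S₂, V₂, H₂⟩ := ih2 hFv
      obtain ⟨q, ts, rfl⟩ := hatom
      refine ⟨S₁ ∪ S₂ ∪ {(0, 2)}, V₁ ∪ V₂, ?_⟩
      intro S hS u hu
      simp only [Finset.union_subset_iff] at hS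
      simp only [Finset.mem_union] at hu
      push_neg at hu
      have hm02 : ((0 : ℕ), (2 : ℕ)) ∈ S := hS.2 (by simp)
      have d1 : N4 0 ((nu S u) '' Γ) (eqN 0 t₁ t₂) := by
        have := H₁ S hS.1.1 u hu.1
        rwa [show nu S u (eqI (Sum.inl 0) t₁ t₂) = eqN 0 t₁ t₂ from by
          rw [show eqI (Sum.inl (0:ℕ)) t₁ t₂ = FormI.atom (Sum.inl 0) [t₁, t₂] from rfl]
          rw [nu_atom_inl (by simpa using hm02)]
          rfl] at this
      have d2 := H₂ S hS.1.2 u hu.2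
      rw [← nu_subst] at d2 ⊢
      cases q with
      | inl p =>
          by_cases hm : (p, ts.length) ∈ S
          · rw [nu_atom_inl hm] at d2 ⊢
            exact N4.eqEr d1 d2 basic_atom
          · rw [nu_atom_inl' hm, subst_eqcc] at d2 ⊢
            exact d2
      | inr p =>
          by_cases hm : (p, ts.length) ∈ S
          · rw [nu_atom_inr hm] at d2 ⊢
            exact N4.eqEr d1 d2 basic_natom
          · rw [nu_atom_inr' hm, subst_eqcc] at d2 ⊢
            exact d2

end Backward

/-! ### Section H: readback N4 ⊢ A ↔ ν(τ A) -/

section Readback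

variable {S : Finset (ℕ × ℕ)} {u : ℕ}

lemma size_posN {P : Type} : ∀ A : FormN P, 1 ≤ A.size := by
  intro A; cases A <;> simp [FormN.size]

lemma predarN_neg (A : FormN ℕ) : predarN A.neg = predarN A := rfl

lemma readback : ∀ (n : ℕ) (B : FormN ℕ), B.size ≤ n → predarN B ⊆ S →
    (∀ Γ : Set (FormN ℕ), FvS Γ → N4 0 (insert (nu S u (tau B)) Γ) B) ∧
    (∀ Γ : Set (FormN ℕ), FvS Γ → N4 0 (insert B Γ) (nu S u (tau B))) ∧
    (∀ Γ : Set (FormN ℕ), FvS Γ → N4 0 (insert (nu S u (tau B.neg)) Γ) B.neg) ∧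
    (∀ Γ : Set (FormN ℕ), FvS Γ → N4 0 (insert B.neg Γ) (nu S u (tau B.neg))) := by
  intro n
  induction n with
  | zero => intro B hB; have := size_posN B; omega
  | succ n ih =>
      intro B hB hS
      cases B with
      | atom p ts =>
          have hm : (p, ts.length) ∈ S := hS (by simp [predarN])
          have e1 : nu S u (tau (FormN.atom p ts)) = FormN.atom p ts := by
            rw [show tau (FormN.atom p ts) = FormI.atom (Sum.inl p) ts from by simp [tau]]
            exact nu_atom_inl hm
          have e2 : nu S u (tau (FormN.atom p ts).neg) = (FormN.atom p ts).neg := by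
            rw [show tau (FormN.atom p ts).neg = FormI.atom (Sum.inr p) ts from by simp [tau]]
            exact nu_atom_inr hm
          refine ⟨?_, ?_, ?_, ?_⟩ <;> intro Γ hFv
          · rw [e1]; exact N4.hyp (Set.mem_insert _ _)
          · rw [e1]; exact N4.hyp (Set.mem_insert _ _)
          · rw [e2]; exact N4.hyp (Set.mem_insert _ _)
          · rw [e2]; exact N4.hyp (Set.mem_insert _ _)
      | imp A B =>
          have hA : A.size ≤ n := by simp [FormN.size] at hB; omega
          have hBs : B.size ≤ n := by simp [FormN.size] at hB; omega
          have hSA : predarN A ⊆ S := fun pk hpk => hS (by simp [predarN, hpk])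
          have hSB : predarN B ⊆ S := fun pk hpk => hS (by simp [predarN, hpk])
          have IHA := ih A hA hSA
          have IHB := ih B hBs hSB
          have e1 : nu S u (tau (A.imp B)) = (nu S u (tau A)).imp (nu S u (tau B)) := by
            rw [show tau (A.imp B) = (tau A).imp (tau B) from by simp [tau]]; rfl
          have e2 : nu S u (tau (A.imp B).neg)
              = (nu S u (tau A)).and (nu S u (tau B.neg)) := by
            rw [show tau (A.imp B).neg = (tau A).and (tau B.neg) from by simp [tau]]; rfl
          refine ⟨?_, ?_, ?_, ?_⟩ <;> intro Γ hFv
          · rw [e1]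
            apply N4.impI
            have dA : N4 0 (insert A (insert ((nu S u (tau A)).imp (nu S u (tau B))) Γ))
                (nu S u (tau A)) := IHA.2.1 _ (hFv.insert _)
            have dB := N4.impE (N4.hyp (Set.mem_insert_of_mem _ (Set.mem_insert _ _))) dA
            exact N4.cut (IHB.1 _ ((hFv.insert _).insert _)) dB
          · rw [e1]
            apply N4.impI
            have dA : N4 0 (insert (nu S u (tau A)) (insert (A.imp B) Γ)) A :=
              IHA.1 _ (hFv.insert _)
            have dB := N4.impE (N4.hyp (Set.mem_insert_of_mem _ (Set.mem_insert _ _))) dA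
            exact N4.cut (IHB.2.1 _ ((hFv.insert _).insert _)) dB
          · rw [e2]
            apply N4.negimpI
            · exact N4.cut (IHA.1 _ (hFv.insert _)) (N4.andE1 (N4.hyp (Set.mem_insert _ _)))
            · exact N4.cut (IHB.2.2.1 _ (hFv.insert _))
                (N4.andE2 (N4.hyp (Set.mem_insert _ _)))
          · rw [e2]
            apply N4.andI
            · exact N4.cut (IHA.2.1 _ (hFv.insert _)) (N4.negimpE1 (N4.hyp (Set.mem_insert _ _)))
            · exact N4.cut (IHB.2.2.2 _ (hFv.insert _)) (N4.negimpE2 (N4.hyp (Set.mem_insert _ _)))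
      | and A B =>
          have hA : A.size ≤ n := by simp [FormN.size] at hB; omega
          have hBs : B.size ≤ n := by simp [FormN.size] at hB; omega
          have hSA : predarN A ⊆ S := fun pk hpk => hS (by simp [predarN, hpk])
          have hSB : predarN B ⊆ S := fun pk hpk => hS (by simp [predarN, hpk])
          have IHA := ih A hA hSA
          have IHB := ih B hBs hSB
          have e1 : nu S u (tau (A.and B)) = (nu S u (tau A)).and (nu S u (tau B)) := by
            rw [show tau (A.and B) = (tau A).and (tau B) from by simp [tau]]; rfl
          have e2 : nu S u (tau (A.and B).neg)
              = (nu S u (tau A.neg)).or (nu S u (tau B.neg)) := by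
            rw [show tau (A.and B).neg = (tau A.neg).or (tau B.neg) from by simp [tau]]; rfl
          refine ⟨?_, ?_, ?_, ?_⟩ <;> intro Γ hFv
          · rw [e1]
            refine N4.andI ?_ ?_
            · exact N4.cut (IHA.1 _ (hFv.insert _)) (N4.andE1 (N4.hyp (Set.mem_insert _ _)))
            · exact N4.cut (IHB.1 _ (hFv.insert _)) (N4.andE2 (N4.hyp (Set.mem_insert _ _)))
          · rw [e1]
            refine N4.andI ?_ ?_
            · exact N4.cut (IHA.2.1 _ (hFv.insert _)) (N4.andE1 (N4.hyp (Set.mem_insert _ _)))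
            · exact N4.cut (IHB.2.1 _ (hFv.insert _)) (N4.andE2 (N4.hyp (Set.mem_insert _ _)))
          · rw [e2]
            apply N4.orE (N4.hyp (Set.mem_insert _ _))
            · exact N4.negandI1 (N4.cut (IHA.2.2.1 _ ((hFv.insert _).insert _))
                (N4.hyp (Set.mem_insert _ _)))
            · exact N4.negandI2 (N4.cut (IHB.2.2.1 _ ((hFv.insert _).insert _))
                (N4.hyp (Set.mem_insert _ _)))
          · rw [e2]
            apply N4.negandE (N4.hyp (Set.mem_insert _ _))
            · exact N4.orI1 (IHA.2.2.2 _ (hFv.insert _))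
            · exact N4.orI2 (IHB.2.2.2 _ (hFv.insert _))
      | or A B =>
          have hA : A.size ≤ n := by simp [FormN.size] at hB; omega
          have hBs : B.size ≤ n := by simp [FormN.size] at hB; omega
          have hSA : predarN A ⊆ S := fun pk hpk => hS (by simp [predarN, hpk])
          have hSB : predarN B ⊆ S := fun pk hpk => hS (by simp [predarN, hpk])
          have IHA := ih A hA hSA
          have IHB := ih B hBs hSB
          have e1 : nu S u (tau (A.or B)) = (nu S u (tau A)).or (nu S u (tau B)) := by
            rw [show tau (A.or B) = (tau A).or (tau B) from by simp [tau]]; rfl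
          have e2 : nu S u (tau (A.or B).neg)
              = (nu S u (tau A.neg)).and (nu S u (tau B.neg)) := by
            rw [show tau (A.or B).neg = (tau A.neg).and (tau B.neg) from by simp [tau]]; rfl
          refine ⟨?_, ?_, ?_, ?_⟩ <;> intro Γ hFv
          · rw [e1]
            apply N4.orE (N4.hyp (Set.mem_insert _ _))
            · exact N4.orI1 (IHA.1 _ (hFv.insert _))
            · exact N4.orI2 (IHB.1 _ (hFv.insert _))
          · rw [e1]
            apply N4.orE (N4.hyp (Set.mem_insert _ _))
            · exact N4.orI1 (IHA.2.1 _ (hFv.insert _))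
            · exact N4.orI2 (IHB.2.1 _ (hFv.insert _))
          · rw [e2]
            refine N4.negorI ?_ ?_
            · exact N4.cut (IHA.2.2.1 _ (hFv.insert _)) (N4.andE1 (N4.hyp (Set.mem_insert _ _)))
            · exact N4.cut (IHB.2.2.1 _ (hFv.insert _)) (N4.andE2 (N4.hyp (Set.mem_insert _ _)))
          · rw [e2]
            refine N4.andI ?_ ?_
            · exact N4.cut (IHA.2.2.2 _ (hFv.insert _)) (N4.negorE1 (N4.hyp (Set.mem_insert _ _)))
            · exact N4.cut (IHB.2.2.2 _ (hFv.insert _)) (N4.negorE2 (N4.hyp (Set.mem_insert _ _)))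
      | neg A =>
          have hA : A.size ≤ n := by simp [FormN.size] at hB; omega
          have hSA : predarN A ⊆ S := hS
          have IHA := ih A hA hSA
          have e : nu S u (tau A.neg.neg) = nu S u (tau A) := by
            rw [show tau A.neg.neg = tau A from by simp [tau]]
          refine ⟨IHA.2.2.1, IHA.2.2.2, ?_, ?_⟩ <;> intro Γ hFv
          · rw [e]
            exact N4.negnegI (IHA.1 _ hFv)
          · have d := N4.negnegE (N4.hyp (Set.mem_insert _ _) :
              N4 0 (insert A.neg.neg Γ) A.neg.neg)
            rw [e]
            exact N4.cut (IHA.2.1 _ (hFv.insert _)) d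
      | all x A =>
          have hA : A.size ≤ n := by simp [FormN.size] at hB; omega
          have hSA : predarN A ⊆ S := hS
          have ihsub : ∀ y : ℕ, _ := fun y : ℕ => ih (A.subst x (.var y))
            (by rw [FormN.size_subst]; exact hA) (by rw [predarN_subst]; exact hSA)
          have eAll : nu S u (tau (FormN.all x A)) = FormN.all x (nu S u (tau A)) := by
            rw [show tau (FormN.all x A) = FormI.all x (tau A) from by simp [tau]]; rfl
          have eAlln : nu S u (tau (FormN.all x A).neg) = FormN.ex x (nu S u (tau A.neg)) := by
            rw [show tau (FormN.all x A).neg = FormI.ex x (tau A.neg) from by simp [tau]]; rfl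
          have esub1 : ∀ y : ℕ, (nu S u (tau A)).subst x (.var y)
              = nu S u (tau (A.subst x (.var y))) := by
            intro y
            rw [nu_subst, ← (tau_subst x (.var y) A).1]
          have esub2 : ∀ y : ℕ, (nu S u (tau A.neg)).subst x (.var y)
              = nu S u (tau ((A.subst x (.var y)).neg)) := by
            intro y
            have h2 := (tau_subst x (.var y) A).2
            simp only [FormN.subst] at h2
            rw [nu_subst, ← h2]
          refine ⟨?_, ?_, ?_, ?_⟩ <;> intro Γ hFv
          · rw [eAll]
            obtain ⟨V, hV⟩ := hFv.insert (FormN.all x (nu S u (tau A)))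
            obtain ⟨hy1, hy2, hy3⟩ := fresh3 V A.fvF (nu S u (tau A)).bvF
            set y := freshVar (V ∪ A.fvF ∪ (nu S u (tau A)).bvF) with hydef
            apply N4.allI (y := y)
            · have d1 : N4 0 (insert (FormN.all x (nu S u (tau A))) Γ)
                  ((nu S u (tau A)).subst x (.var y)) :=
                N4.allE (N4.hyp (Set.mem_insert _ Γ))
                  (freeFor_var (fun h => hy3 (FormN.mem_bvF.mpr h)))
              rw [esub1 y] at d1
              exact N4.cut ((ihsub y).1 _ ⟨V, hV⟩) d1
            · exact fun G hG hv => hy1 (hV G hG y hv)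
            · exact Or.inr (fun h => hy2 (FormN.mem_fvF.mpr h))
          · rw [eAll]
            obtain ⟨V, hV⟩ := hFv.insert (FormN.all x A)
            obtain ⟨hy1, hy2, hy3⟩ := fresh3 V A.bvF (nu S u (tau A)).fvF
            set y := freshVar (V ∪ A.bvF ∪ (nu S u (tau A)).fvF) with hydef
            apply N4.allI (y := y)
            · have d1 : N4 0 (insert (FormN.all x A) Γ) (A.subst x (.var y)) :=
                N4.allE (N4.hyp (Set.mem_insert _ Γ))
                  (freeFor_var (fun h => hy2 (FormN.mem_bvF.mpr h)))
              have d2 := N4.cut ((ihsub y).2.1 _ ⟨V, hV⟩) d1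
              rwa [← esub1 y] at d2
            · exact fun G hG hv => hy1 (hV G hG y hv)
            · exact Or.inr (fun h => hy3 (FormN.mem_fvF.mpr h))
          · rw [eAlln]
            obtain ⟨V, hV⟩ := hFv.insert (FormN.ex x (nu S u (tau A.neg)))
            obtain ⟨hy1, hy2, hy3, hy4⟩ := fresh4 V A.fvF A.bvF (nu S u (tau A.neg)).fvF
            set y := freshVar (V ∪ A.fvF ∪ A.bvF ∪ (nu S u (tau A.neg)).fvF) with hydef
            apply N4.exE (A := nu S u (tau A.neg)) (x := x) (y := y)
              (N4.hyp (Set.mem_insert _ _))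
            · rw [esub2 y]
              exact N4.negallI ((ihsub y).2.2.1 _ ⟨V, hV⟩)
                (freeFor_var (fun h => hy3 (FormN.mem_bvF.mpr h)))
            · exact fun hv => hy2 (FormN.mem_fvF.mpr hv.1)
            · exact fun G hG hv => hy1 (hV G hG y hv)
            · exact Or.inr (fun h => hy4 (FormN.mem_fvF.mpr h))
          · rw [eAlln]
            obtain ⟨V, hV⟩ := hFv.insert ((FormN.all x A).neg)
            obtain ⟨hy1, hy2, hy3, hy4⟩ :=
              fresh4 V A.fvF (nu S u (tau A.neg)).fvF (nu S u (tau A.neg)).bvF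
            set y := freshVar (V ∪ A.fvF ∪ (nu S u (tau A.neg)).fvF ∪ (nu S u (tau A.neg)).bvF)
              with hydef
            apply N4.negallE (A := A) (x := x) (y := y) (N4.hyp (Set.mem_insert _ _))
            · have d := (ihsub y).2.2.2 _ ⟨V, hV⟩
              rw [← esub2 y] at d
              exact N4.exI d (freeFor_var (fun h => hy4 (FormN.mem_bvF.mpr h)))
            · exact fun hv => hy3 (FormN.mem_fvF.mpr hv.1)
            · exact fun G hG hv => hy1 (hV G hG y hv)
            · exact Or.inr (fun h => hy2 (FormN.mem_fvF.mpr h))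
      | ex x A =>
          have hA : A.size ≤ n := by simp [FormN.size] at hB; omega
          have hSA : predarN A ⊆ S := hS
          have ihsub : ∀ y : ℕ, _ := fun y : ℕ => ih (A.subst x (.var y))
            (by rw [FormN.size_subst]; exact hA) (by rw [predarN_subst]; exact hSA)
          have eEx : nu S u (tau (FormN.ex x A)) = FormN.ex x (nu S u (tau A)) := by
            rw [show tau (FormN.ex x A) = FormI.ex x (tau A) from by simp [tau]]; rfl
          have eExn : nu S u (tau (FormN.ex x A).neg) = FormN.all x (nu S u (tau A.neg)) := by
            rw [show tau (FormN.ex x A).neg = FormI.all x (tau A.neg) from by simp [tau]]; rfl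
          have esub1 : ∀ y : ℕ, (nu S u (tau A)).subst x (.var y)
              = nu S u (tau (A.subst x (.var y))) := by
            intro y
            rw [nu_subst, ← (tau_subst x (.var y) A).1]
          have esub2 : ∀ y : ℕ, (nu S u (tau A.neg)).subst x (.var y)
              = nu S u (tau ((A.subst x (.var y)).neg)) := by
            intro y
            have h2 := (tau_subst x (.var y) A).2
            simp only [FormN.subst] at h2
            rw [nu_subst, ← h2]
          refine ⟨?_, ?_, ?_, ?_⟩ <;> intro Γ hFv
          · rw [eEx]
            obtain ⟨V, hV⟩ := hFv.insert (FormN.ex x (nu S u (tau A)))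
            obtain ⟨hy1, hy2, hy3, hy4⟩ := fresh4 V A.fvF A.bvF (nu S u (tau A)).fvF
            set y := freshVar (V ∪ A.fvF ∪ A.bvF ∪ (nu S u (tau A)).fvF) with hydef
            apply N4.exE (A := nu S u (tau A)) (x := x) (y := y)
              (N4.hyp (Set.mem_insert _ _))
            · rw [esub1 y]
              exact N4.exI ((ihsub y).1 _ ⟨V, hV⟩)
                (freeFor_var (fun h => hy3 (FormN.mem_bvF.mpr h)))
            · exact fun hv => hy2 (FormN.mem_fvF.mpr hv.1)
            · exact fun G hG hv => hy1 (hV G hG y hv)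
            · exact Or.inr (fun h => hy4 (FormN.mem_fvF.mpr h))
          · rw [eEx]
            obtain ⟨V, hV⟩ := hFv.insert (FormN.ex x A)
            obtain ⟨hy1, hy2, hy3, hy4⟩ :=
              fresh4 V A.fvF (nu S u (tau A)).fvF (nu S u (tau A)).bvF
            set y := freshVar (V ∪ A.fvF ∪ (nu S u (tau A)).fvF ∪ (nu S u (tau A)).bvF)
              with hydef
            apply N4.exE (A := A) (x := x) (y := y) (N4.hyp (Set.mem_insert _ _))
            · have d := (ihsub y).2.1 _ ⟨V, hV⟩
              rw [← esub1 y] at d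
              exact N4.exI d (freeFor_var (fun h => hy4 (FormN.mem_bvF.mpr h)))
            · exact fun hv => hy3 (FormN.mem_fvF.mpr hv.1)
            · exact fun G hG hv => hy1 (hV G hG y hv)
            · exact Or.inr (fun h => hy2 (FormN.mem_fvF.mpr h))
          · rw [eExn]
            obtain ⟨V, hV⟩ := hFv.insert (FormN.all x (nu S u (tau A.neg)))
            obtain ⟨hy1, hy2, hy3⟩ := fresh3 V A.fvF (nu S u (tau A.neg)).bvF
            set y := freshVar (V ∪ A.fvF ∪ (nu S u (tau A.neg)).bvF) with hydef
            apply N4.negexI (A := A) (x := x) (y := y)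
            · have d1 : N4 0 (insert (FormN.all x (nu S u (tau A.neg))) Γ)
                  ((nu S u (tau A.neg)).subst x (.var y)) :=
                N4.allE (N4.hyp (Set.mem_insert _ Γ))
                  (freeFor_var (fun h => hy3 (FormN.mem_bvF.mpr h)))
              rw [esub2 y] at d1
              exact N4.cut ((ihsub y).2.2.1 _ ⟨V, hV⟩) d1
            · exact fun G hG hv => hy1 (hV G hG y hv)
            · exact Or.inr (fun h => hy2 (FormN.mem_fvF.mpr h))
          · rw [eExn]
            obtain ⟨V, hV⟩ := hFv.insert ((FormN.ex x A).neg)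
            obtain ⟨hy1, hy2, hy3⟩ := fresh3 V A.bvF (nu S u (tau A.neg)).fvF
            set y := freshVar (V ∪ A.bvF ∪ (nu S u (tau A.neg)).fvF) with hydef
            apply N4.allI (y := y)
            · have d1 : N4 0 (insert (FormN.ex x A).neg Γ) ((A.subst x (.var y)).neg) :=
                N4.negexE (N4.hyp (Set.mem_insert _ Γ))
                  (freeFor_var (fun h => hy2 (FormN.mem_bvF.mpr h)))
              have d2 := N4.cut ((ihsub y).2.2.2 _ ⟨V, hV⟩) d1
              rwa [← esub2 y] at d2
            · exact fun G hG hv => hy1 (hV G hG y hv)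
            · exact Or.inr (fun h => hy3 (FormN.mem_fvF.mpr h))

end Readback

/-! ### Section I: forward direction -/

section Forward

lemma forward {Γ : Set (FormN ℕ)} {A : FormN ℕ} (h : N4 0 Γ A) :
    IntP (Sum.inl 0) (tau '' Γ) (tau A) := by
  induction h with
  | hyp h => exact IntP.hyp (Set.mem_image_of_mem _ h)
  | @andI Γ A B _ _ ih1 ih2 =>
      rw [show tau (A.and B) = (tau A).and (tau B) from by simp [tau]]
      exact IntP.andI ih1 ih2
  | @andE1 Γ A B _ ih =>
      rw [show tau (A.and B) = (tau A).and (tau B) from by simp [tau]] at ih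
      exact IntP.andE1 ih
  | @andE2 Γ A B _ ih =>
      rw [show tau (A.and B) = (tau A).and (tau B) from by simp [tau]] at ih
      exact IntP.andE2 ih
  | @orI1 Γ A B _ ih =>
      rw [show tau (A.or B) = (tau A).or (tau B) from by simp [tau]]
      exact IntP.orI1 ih
  | @orI2 Γ A B _ ih =>
      rw [show tau (A.or B) = (tau A).or (tau B) from by simp [tau]]
      exact IntP.orI2 ih
  | @orE Γ A B C _ _ _ ih ih1 ih2 =>
      rw [show tau (A.or B) = (tau A).or (tau B) from by simp [tau]] at ih
      rw [Set.image_insert_eq] at ih1 ih2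
      exact IntP.orE ih ih1 ih2
  | @impI Γ A B _ ih =>
      rw [show tau (A.imp B) = (tau A).imp (tau B) from by simp [tau]]
      rw [Set.image_insert_eq] at ih
      exact IntP.impI ih
  | @impE Γ A B _ _ ih1 ih2 =>
      rw [show tau (A.imp B) = (tau A).imp (tau B) from by simp [tau]] at ih1
      exact IntP.impE ih1 ih2
  | @negnegI Γ A _ ih =>
      rw [show tau A.neg.neg = tau A from by simp [tau]]
      exact ih
  | @negnegE Γ A _ ih =>
      rw [show tau A.neg.neg = tau A from by simp [tau]] at ih
      exact ih
  | @negimpI Γ A B _ _ ih1 ih2 =>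
      rw [show tau (A.imp B).neg = (tau A).and (tau B.neg) from by simp [tau]]
      exact IntP.andI ih1 ih2
  | @negimpE1 Γ A B _ ih =>
      rw [show tau (A.imp B).neg = (tau A).and (tau B.neg) from by simp [tau]] at ih
      exact IntP.andE1 ih
  | @negimpE2 Γ A B _ ih =>
      rw [show tau (A.imp B).neg = (tau A).and (tau B.neg) from by simp [tau]] at ih
      exact IntP.andE2 ih
  | @negorI Γ A B _ _ ih1 ih2 =>
      rw [show tau (A.or B).neg = (tau A.neg).and (tau B.neg) from by simp [tau]]
      exact IntP.andI ih1 ih2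
  | @negorE1 Γ A B _ ih =>
      rw [show tau (A.or B).neg = (tau A.neg).and (tau B.neg) from by simp [tau]] at ih
      exact IntP.andE1 ih
  | @negorE2 Γ A B _ ih =>
      rw [show tau (A.or B).neg = (tau A.neg).and (tau B.neg) from by simp [tau]] at ih
      exact IntP.andE2 ih
  | @negandI1 Γ A B _ ih =>
      rw [show tau (A.and B).neg = (tau A.neg).or (tau B.neg) from by simp [tau]]
      exact IntP.orI1 ih
  | @negandI2 Γ A B _ ih =>
      rw [show tau (A.and B).neg = (tau A.neg).or (tau B.neg) from by simp [tau]]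
      exact IntP.orI2 ih
  | @negandE Γ A B C _ _ _ ih ih1 ih2 =>
      rw [show tau (A.and B).neg = (tau A.neg).or (tau B.neg) from by simp [tau]] at ih
      rw [Set.image_insert_eq] at ih1 ih2
      exact IntP.orE ih ih1 ih2
  | @allI Γ A x y _ hyΓ hyA ih =>
      rw [show tau (FormN.all x A) = FormI.all x (tau A) from by simp [tau]]
      rw [(tau_subst x (.var y) A).1] at ih
      apply IntP.allI ih
      · rintro G ⟨G₀, hG₀, rfl⟩ hv
        rw [(tau_fv G₀).1] at hv
        exact hyΓ G₀ hG₀ hv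
      · rcases hyA with h' | h'
        · exact Or.inl h'
        · refine Or.inr (fun hv => h' ?_)
          rwa [(tau_fv A).1] at hv
  | @allE Γ A x t _ hfree ih =>
      rw [show tau (FormN.all x A) = FormI.all x (tau A) from by simp [tau]] at ih
      rw [(tau_subst x t A).1]
      apply IntP.allE ih
      intro v hv hbv
      rw [(tau_bv A).1] at hbv
      exact hfree v hv hbv
  | @negallI Γ A x t _ hfree ih =>
      rw [show tau (FormN.all x A).neg = FormI.ex x (tau A.neg) from by simp [tau]]
      have h2 := (tau_subst x t A).2
      simp only [FormN.subst] at h2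
      rw [h2] at ih
      apply IntP.exI ih
      intro v hv hbv
      rw [(tau_bv A).2] at hbv
      exact hfree v hv hbv
  | @negallE Γ A C x y _ _ hyC hyΓ hyA ih ih1 =>
      rw [show tau (FormN.all x A).neg = FormI.ex x (tau A.neg) from by simp [tau]] at ih
      rw [Set.image_insert_eq] at ih1
      have h2 := (tau_subst x (.var y) A).2
      simp only [FormN.subst] at h2
      rw [h2] at ih1
      apply IntP.exE ih ih1
      · intro hv
        rw [(tau_fv C).1] at hv
        exact hyC hv
      · rintro G ⟨G₀, hG₀, rfl⟩ hv
        rw [(tau_fv G₀).1] at hv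
        exact hyΓ G₀ hG₀ hv
      · rcases hyA with h' | h'
        · exact Or.inl h'
        · refine Or.inr (fun hv => h' ?_)
          rwa [(tau_fv A).2] at hv
  | @exI Γ A x t _ hfree ih =>
      rw [show tau (FormN.ex x A) = FormI.ex x (tau A) from by simp [tau]]
      rw [(tau_subst x t A).1] at ih
      apply IntP.exI ih
      intro v hv hbv
      rw [(tau_bv A).1] at hbv
      exact hfree v hv hbv
  | @exE Γ A C x y _ _ hyC hyΓ hyA ih ih1 =>
      rw [show tau (FormN.ex x A) = FormI.ex x (tau A) from by simp [tau]] at ih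
      rw [Set.image_insert_eq, (tau_subst x (.var y) A).1] at ih1
      apply IntP.exE ih ih1
      · intro hv
        rw [(tau_fv C).1] at hv
        exact hyC hv
      · rintro G ⟨G₀, hG₀, rfl⟩ hv
        rw [(tau_fv G₀).1] at hv
        exact hyΓ G₀ hG₀ hv
      · rcases hyA with h' | h'
        · exact Or.inl h'
        · refine Or.inr (fun hv => h' ?_)
          rwa [(tau_fv A).1] at hv
  | @negexI Γ A x y _ hyΓ hyA ih =>
      rw [show tau (FormN.ex x A).neg = FormI.all x (tau A.neg) from by simp [tau]]
      have h2 := (tau_subst x (.var y) A).2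
      simp only [FormN.subst] at h2
      rw [h2] at ih
      apply IntP.allI ih
      · rintro G ⟨G₀, hG₀, rfl⟩ hv
        rw [(tau_fv G₀).1] at hv
        exact hyΓ G₀ hG₀ hv
      · rcases hyA with h' | h'
        · exact Or.inl h'
        · refine Or.inr (fun hv => h' ?_)
          rwa [(tau_fv A).2] at hv
  | @negexE Γ A x t _ hfree ih =>
      rw [show tau (FormN.ex x A).neg = FormI.all x (tau A.neg) from by simp [tau]] at ih
      have h2 := (tau_subst x t A).2
      simp only [FormN.subst] at h2
      rw [h2]
      apply IntP.allE ih
      intro v hv hbv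
      rw [(tau_bv A).2] at hbv
      exact hfree v hv hbv
  | @eqIr Γ t =>
      rw [show tau (eqN 0 t t) = eqI (Sum.inl 0) t t from by simp [tau, eqN, eqI]]
      exact IntP.eqIr
  | @eqEr Γ A x t₁ t₂ _ _ hbasic ih1 ih2 =>
      rw [show tau (eqN 0 t₁ t₂) = eqI (Sum.inl 0) t₁ t₂ from by simp [tau, eqN, eqI]] at ih1
      cases A with
      | atom p ts =>
          rw [(tau_subst x t₁ (FormN.atom p ts)).1] at ih2
          rw [(tau_subst x t₂ (FormN.atom p ts)).1]
          have e : tau (FormN.atom p ts) = FormI.atom (Sum.inl p) ts := by simp [tau]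
          rw [e] at ih2 ⊢
          exact IntP.eqEr ih1 ih2 ⟨Sum.inl p, ts, rfl⟩
      | neg B =>
          cases B with
          | atom p ts =>
              have h1 := (tau_subst x t₁ (FormN.atom p ts)).2
              have h2 := (tau_subst x t₂ (FormN.atom p ts)).2
              simp only [FormN.subst] at h1 h2 ih2 ⊢
              rw [h1] at ih2
              rw [h2]
              have e : tau (FormN.atom p ts).neg = FormI.atom (Sum.inr p) ts := by simp [tau]
              rw [e] at ih2 ⊢
              exact IntP.eqEr ih1 ih2 ⟨Sum.inr p, ts, rfl⟩
          | imp _ _ => exact hbasic.elim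
          | and _ _ => exact hbasic.elim
          | or _ _ => exact hbasic.elim
          | neg _ => exact hbasic.elim
          | all _ _ => exact hbasic.elim
          | ex _ _ => exact hbasic.elim
      | imp _ _ => exact hbasic.elim
      | and _ _ => exact hbasic.elim
      | or _ _ => exact hbasic.elim
      | all _ _ => exact hbasic.elim
      | ex _ _ => exact hbasic.elim

end Forward

/-- Syntactical embedding of N4 into Int: for every formula `A` of
Nelson's language, `A` is provable in N4 iff `τ(A)` is provable in intuitionistic
first-order logic with identity over the primed-predicate language (the identity
predicate of the source language is `0`; its copy in the target is `Sum.inl 0`). -/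
theorem syntactic_embedding (A : FormN ℕ) :
    N4 0 ∅ A ↔ IntP (Sum.inl 0) ∅ (tau A) := by
  constructor
  · intro h
    have := forward h
    rwa [Set.image_empty] at this
  · intro h
    obtain ⟨S₀, V₀, H⟩ := backward_main h FvSI.empty
    have d : N4 0 ((nu (S₀ ∪ predarN A) (freshVar V₀)) '' ∅)
        (nu (S₀ ∪ predarN A) (freshVar V₀) (tau A)) :=
      H (S₀ ∪ predarN A) Finset.subset_union_left (freshVar V₀) (freshVar_not_mem V₀)
    rw [Set.image_empty] at d
    have rb := (readback (S := S₀ ∪ predarN A) (u := freshVar V₀) A.size A le_rfl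
      Finset.subset_union_right).1 ∅ FvS.empty
    exact N4.cut rb d
end

section
/- The rules (¬II₁) and (¬II₂) are sound for Nelsonian Kripke semantics: if at world w the formula ¬F[x:=y] (respectively ¬G[x:=y]) is forced for a fresh variable y not free in the conclusion's side assumptions, with y ranging over all successors' domain elements via the generality interpretation, then ¬Ix[F,G] is forced at w. -/
/-- Formulas of Nelson's language with strong negation and the binary
definite-description quantifier `iq x F G` (i.e. `Ix[F,G]`).
Identity is the distinguished predicate symbol `0` (see `eqf`). -/
inductive Form (P : Type) where
  | atom : P → List Tm → Form P
  | imp : Form P → Form P → Form P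
  | and : Form P → Form P → Form P
  | or  : Form P → Form P → Form P
  | neg : Form P → Form P
  | all : ℕ → Form P → Form P
  | ex  : ℕ → Form P → Form P
  | iq  : ℕ → Form P → Form P → Form P

/-- The identity predicate: `t = u`. -/
def eqf {P : Type} (e : P) (t u : Tm) : Form P := .atom e [t, u]

/-- Substitution `A[x := t]` (substituting `t` for the free occurrences of `x`). -/
def Form.subst {P : Type} (x : ℕ) (t : Tm) : Form P → Form P
  | .atom p ts => .atom p (ts.map (Tm.subst x t))
  | .imp A B => .imp (A.subst x t) (B.subst x t)
  | .and A B => .and (A.subst x t) (B.subst x t)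
  | .or A B => .or (A.subst x t) (B.subst x t)
  | .neg A => .neg (A.subst x t)
  | .all y A => if y = x then .all y A else .all y (A.subst x t)
  | .ex y A => if y = x then .ex y A else .ex y (A.subst x t)
  | .iq y F G => if y = x then .iq y F G else .iq y (F.subst x t) (G.subst x t)

/-- Free variables of a formula. -/
def Form.fv {P : Type} : Form P → Set ℕ
  | .atom _ ts => {y | ∃ t ∈ ts, y ∈ t.fv}
  | .imp A B => A.fv ∪ B.fv
  | .and A B => A.fv ∪ B.fv
  | .or A B => A.fv ∪ B.fv
  | .neg A => A.fv
  | .all y A => A.fv \ {y}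
  | .ex y A => A.fv \ {y}
  | .iq y F G => (F.fv ∪ G.fv) \ {y}

/-- Bound variables of a formula. -/
def Form.bv {P : Type} : Form P → Set ℕ
  | .atom _ _ => ∅
  | .imp A B => A.bv ∪ B.bv
  | .and A B => A.bv ∪ B.bv
  | .or A B => A.bv ∪ B.bv
  | .neg A => A.bv
  | .all y A => insert y A.bv
  | .ex y A => insert y A.bv
  | .iq y F G => insert y (F.bv ∪ G.bv)

/-- `t` is free for `x` in `A` (sufficient condition: no variable of `t` is bound in `A`). -/
def FreeFor {P : Type} (t : Tm) (A : Form P) : Prop := ∀ v ∈ t.fv, v ∉ A.bv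

/-- A Nelsonian Kripke structure (over predicate letters `P`, with identity
predicate `eqd`): a reflexive transitive frame with increasing nonempty domains
and persistent, independent positive (`pos`) and negative (`nneg`) extensions
of every predicate letter; the positive extension of identity is the diagonal. -/
structure NModel (P : Type) (eqd : P) where
  W : Type
  w0 : W
  R : W → W → Prop
  refl : ∀ w, R w w
  trans : ∀ {w₁ w₂ w₃}, R w₁ w₂ → R w₂ w₃ → R w₁ w₃
  D : Type
  cval : ℕ → D
  Dw : W → Set D
  Dw_ne : ∀ w, (Dw w).Nonempty
  Dw_mono : ∀ {w w'}, R w w' → Dw w ⊆ Dw w'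
  pos : W → P → List D → Prop
  nneg : W → P → List D → Prop
  pos_mono : ∀ {w w'} (p : P) (ds : List D), R w w' → pos w p ds → pos w' p ds
  nneg_mono : ∀ {w w'} (p : P) (ds : List D), R w w' → nneg w p ds → nneg w' p ds
  eq_pos : ∀ w d e, pos w eqd [d, e] ↔ (d = e ∧ d ∈ Dw w)

variable {P : Type}

/-- Value of a term under an assignment of the variables. -/
def NModel.tval {e0 : P} (M : NModel P e0) (ρ : ℕ → M.D) : Tm → M.D
  | .var x => ρ x
  | .const c => M.cval c

/-- Update of an assignment. -/
def upd {D : Type} (ρ : ℕ → D) (x : ℕ) (d : D) : ℕ → D :=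
  fun z => if z = x then d else ρ z

/-- The Nelsonian paradefinite valuation: `force true` is truth (`⊩ᴺ A`) and
`force false` is falsity (`⊩ᴺ ¬A`), with intuitionistic positive clauses,
constructive negative clauses, and the stipulated truth and falsity clauses for
the binary definite-description quantifier `Ix[F,G]`. -/
def NModel.force {e0 : P} (M : NModel P e0) :
    Bool → Form P → M.W → (ℕ → M.D) → Prop
  | true, .atom p ts, w, ρ => M.pos w p (ts.map (M.tval ρ))
  | false, .atom p ts, w, ρ => M.nneg w p (ts.map (M.tval ρ))
  | b, .neg A, w, ρ => M.force (!b) A w ρ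
  | true, .and A B, w, ρ => M.force true A w ρ ∧ M.force true B w ρ
  | false, .and A B, w, ρ => M.force false A w ρ ∨ M.force false B w ρ
  | true, .or A B, w, ρ => M.force true A w ρ ∨ M.force true B w ρ
  | false, .or A B, w, ρ => M.force false A w ρ ∧ M.force false B w ρ
  | true, .imp A B, w, ρ =>
      ∀ w', M.R w w' → M.force true A w' ρ → M.force true B w' ρ
  | false, .imp A B, w, ρ => M.force true A w ρ ∧ M.force false B w ρ
  | true, .all x A, w, ρ =>
      ∀ w', M.R w w' → ∀ d ∈ M.Dw w', M.force true A w' (upd ρ x d)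
  | false, .all x A, w, ρ => ∃ d ∈ M.Dw w, M.force false A w (upd ρ x d)
  | true, .ex x A, w, ρ => ∃ d ∈ M.Dw w, M.force true A w (upd ρ x d)
  | false, .ex x A, w, ρ =>
      ∀ w', M.R w w' → ∀ d ∈ M.Dw w', M.force false A w' (upd ρ x d)
  | true, .iq x F G, w, ρ =>
      ∃ d ∈ M.Dw w, M.force true F w (upd ρ x d) ∧ M.force true G w (upd ρ x d) ∧
        ∀ w', M.R w w' → ∀ e ∈ M.Dw w', ∀ w'', M.R w' w'' →
          M.force true F w'' (upd ρ x e) → M.pos w'' e0 [d, e]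
  | false, .iq x F G, w, ρ =>
      ∀ w', M.R w w' → ∀ d ∈ M.Dw w',
        M.force false F w' (upd ρ x d) ∨
        (∃ e ∈ M.Dw w', M.force true F w' (upd ρ x e) ∧ M.nneg w' e0 [e, d]) ∨
        M.force false G w' (upd ρ x d)

/-- Soundness of the rules (¬II₁) and (¬II₂) for Nelsonian Kripke
semantics: if the premise `¬F[x:=y]` (respectively `¬G[x:=y]`) holds at `w`
under the generality interpretation of the fresh variable `y` (i.e. at every
`R`-successor `w'` of `w` and for every element `d` of the domain at `w'`), then
`¬Ix[F,G]` is forced at `w`. -/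
theorem negiqI1_negiqI2_sound (M : NModel ℕ 0) (x : ℕ) (F G : Form ℕ)
    (w : M.W) (ρ : ℕ → M.D) :
    ((∀ w', M.R w w' → ∀ d ∈ M.Dw w', M.force false F w' (upd ρ x d)) →
      M.force false (Form.iq x F G) w ρ) ∧
    ((∀ w', M.R w w' → ∀ d ∈ M.Dw w', M.force false G w' (upd ρ x d)) →
      M.force false (Form.iq x F G) w ρ) := by
  constructor
  · intro h w' hww' d hd
    exact Or.inl (h w' hww' d hd)
  · intro h w' hww' d hd
    exact Or.inr (Or.inr (h w' hww' d hd))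
end

section
/- In every Nelsonian Kripke structure, the semantic clause for Ix[F,G] coincides with the semantic clause for ∃x(F ∧ ∀y(F[x:=y] → y=x) ∧ G): a world forces the former iff it forces the latter. -/
variable {P : Type}

/-- Russell's analysis of `the F is G`: `∃x(F ∧ ∀y(F[x:=y] → y=x) ∧ G)`. -/
def russell (x y : ℕ) (F G : Form ℕ) : Form ℕ :=
  .ex x (F.and ((Form.all y ((F.subst x (.var y)).imp (eqf 0 (.var y) (.var x)))).and G))


section Aux
variable {P : Type} {e0 : P}

lemma upd_comm {D : Type} (ρ : ℕ → D) {x z : ℕ} (h : z ≠ x) (d v : D) :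
    upd (upd ρ z d) x v = upd (upd ρ x v) z d := by
  funext w
  simp only [upd]
  by_cases h1 : w = x <;> by_cases h2 : w = z <;> simp_all

lemma tval_agree (M : NModel P e0) {ρ ρ' : ℕ → M.D} (t : Tm)
    (h : ∀ v ∈ t.fv, ρ v = ρ' v) : M.tval ρ t = M.tval ρ' t := by
  cases t with
  | var z => exact h z (by simp [Tm.fv])
  | const c => rfl

lemma upd_agree {D : Type} {ρ ρ' : ℕ → D} {S : Set ℕ} (x : ℕ) (d : D)
    (h : ∀ v ∈ S \ {x}, ρ v = ρ' v) : ∀ v ∈ S, upd ρ x d v = upd ρ' x d v := by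
  intro v hv
  by_cases hx : v = x
  · simp [upd, hx]
  · simp only [upd, if_neg hx]; exact h v ⟨hv, hx⟩

lemma force_agree_mp (M : NModel P e0) (A : Form P) :
    ∀ (b : Bool) (w : M.W) (ρ ρ' : ℕ → M.D),
    (∀ v ∈ A.fv, ρ v = ρ' v) → M.force b A w ρ → M.force b A w ρ' := by
  induction A with
  | atom p ts =>
      intro b w ρ ρ' h
      have hts : ts.map (M.tval ρ) = ts.map (M.tval ρ') :=
        List.map_congr_left fun t ht => tval_agree M t fun v hv => h v ⟨t, ht, hv⟩
      cases b <;> simp only [NModel.force, hts] <;> exact id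
  | imp A B ihA ihB =>
      intro b w ρ ρ' h
      have hA : ∀ v ∈ A.fv, ρ v = ρ' v := fun v hv => h v (Set.mem_union_left _ hv)
      have hB : ∀ v ∈ B.fv, ρ v = ρ' v := fun v hv => h v (Set.mem_union_right _ hv)
      have hA' : ∀ v ∈ A.fv, ρ' v = ρ v := fun v hv => (hA v hv).symm
      cases b
      · simp only [NModel.force]
        exact fun hh => ⟨ihA true w ρ ρ' hA hh.1, ihB false w ρ ρ' hB hh.2⟩
      · simp only [NModel.force]
        exact fun hh w' hr ha => ihB true w' ρ ρ' hB (hh w' hr (ihA true w' ρ' ρ hA' ha))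
  | and A B ihA ihB =>
      intro b w ρ ρ' h
      have hA : ∀ v ∈ A.fv, ρ v = ρ' v := fun v hv => h v (Set.mem_union_left _ hv)
      have hB : ∀ v ∈ B.fv, ρ v = ρ' v := fun v hv => h v (Set.mem_union_right _ hv)
      cases b
      · simp only [NModel.force]
        exact fun hh => hh.elim (fun q => Or.inl (ihA false w ρ ρ' hA q))
          (fun q => Or.inr (ihB false w ρ ρ' hB q))
      · simp only [NModel.force]
        exact fun hh => ⟨ihA true w ρ ρ' hA hh.1, ihB true w ρ ρ' hB hh.2⟩
  | or A B ihA ihB =>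
      intro b w ρ ρ' h
      have hA : ∀ v ∈ A.fv, ρ v = ρ' v := fun v hv => h v (Set.mem_union_left _ hv)
      have hB : ∀ v ∈ B.fv, ρ v = ρ' v := fun v hv => h v (Set.mem_union_right _ hv)
      cases b
      · simp only [NModel.force]
        exact fun hh => ⟨ihA false w ρ ρ' hA hh.1, ihB false w ρ ρ' hB hh.2⟩
      · simp only [NModel.force]
        exact fun hh => hh.elim (fun q => Or.inl (ihA true w ρ ρ' hA q))
          (fun q => Or.inr (ihB true w ρ ρ' hB q))
  | neg A ihA =>
      intro b w ρ ρ' h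
      cases b <;> simp only [NModel.force] <;> exact fun hh => ihA _ w ρ ρ' h hh
  | all z A ihA =>
      intro b w ρ ρ' h
      have hA : ∀ (d : M.D), ∀ v ∈ A.fv, upd ρ z d v = upd ρ' z d v :=
        fun d => upd_agree z d h
      cases b
      · simp only [NModel.force]
        exact fun ⟨d, hd, hf⟩ => ⟨d, hd, ihA false w _ _ (hA d) hf⟩
      · simp only [NModel.force]
        exact fun hh w' hr d hd => ihA true w' _ _ (hA d) (hh w' hr d hd)
  | ex z A ihA =>
      intro b w ρ ρ' h
      have hA : ∀ (d : M.D), ∀ v ∈ A.fv, upd ρ z d v = upd ρ' z d v :=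
        fun d => upd_agree z d h
      cases b
      · simp only [NModel.force]
        exact fun hh w' hr d hd => ihA false w' _ _ (hA d) (hh w' hr d hd)
      · simp only [NModel.force]
        exact fun ⟨d, hd, hf⟩ => ⟨d, hd, ihA true w _ _ (hA d) hf⟩
  | iq z F G ihF ihG =>
      intro b w ρ ρ' h
      have hF : ∀ (d : M.D), ∀ v ∈ F.fv, upd ρ z d v = upd ρ' z d v :=
        fun d => upd_agree z d (fun v hv => h v ⟨Set.mem_union_left _ hv.1, hv.2⟩)
      have hG : ∀ (d : M.D), ∀ v ∈ G.fv, upd ρ z d v = upd ρ' z d v :=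
        fun d => upd_agree z d (fun v hv => h v ⟨Set.mem_union_right _ hv.1, hv.2⟩)
      have hF' : ∀ (d : M.D), ∀ v ∈ F.fv, upd ρ' z d v = upd ρ z d v :=
        fun d v hv => (hF d v hv).symm
      cases b
      · simp only [NModel.force]
        intro hh w' hr d hd
        rcases hh w' hr d hd with q | ⟨e, he, q1, q2⟩ | q
        · exact Or.inl (ihF false w' _ _ (hF d) q)
        · exact Or.inr (Or.inl ⟨e, he, ihF true w' _ _ (hF e) q1, q2⟩)
        · exact Or.inr (Or.inr (ihG false w' _ _ (hG d) q))
      · simp only [NModel.force]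
        rintro ⟨d, hd, q1, q2, q3⟩
        refine ⟨d, hd, ihF true w _ _ (hF d) q1, ihG true w _ _ (hG d) q2, ?_⟩
        intro w' hr e he w'' hr' hf
        exact q3 w' hr e he w'' hr' (ihF true w'' _ _ (hF' e) hf)

lemma force_agree (M : NModel P e0) (A : Form P) (b : Bool) (w : M.W)
    (ρ ρ' : ℕ → M.D) (h : ∀ v ∈ A.fv, ρ v = ρ' v) :
    M.force b A w ρ ↔ M.force b A w ρ' :=
  ⟨force_agree_mp M A b w ρ ρ' h,
   force_agree_mp M A b w ρ' ρ (fun v hv => (h v hv).symm)⟩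

lemma tval_subst (M : NModel P e0) (x : ℕ) (t u : Tm) (ρ : ℕ → M.D) :
    M.tval ρ (Tm.subst x t u) = M.tval (upd ρ x (M.tval ρ t)) u := by
  cases u with
  | var z =>
      simp only [Tm.subst, NModel.tval, upd]
      by_cases h : z = x <;> simp [h, NModel.tval]
  | const c => rfl

lemma force_subst (M : NModel P e0) (x : ℕ) (t : Tm) (A : Form P)
    (hfree : FreeFor t A) :
    ∀ (b : Bool) (w : M.W) (ρ : ℕ → M.D),
    M.force b (A.subst x t) w ρ ↔ M.force b A w (upd ρ x (M.tval ρ t)) := by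
  induction A with
  | atom p ts =>
      intro b w ρ
      have hts : (ts.map (Tm.subst x t)).map (M.tval ρ)
          = ts.map (M.tval (upd ρ x (M.tval ρ t))) := by
        rw [List.map_map]
        exact List.map_congr_left fun u _ => by
          simp only [Function.comp_apply]; exact tval_subst M x t u ρ
      cases b <;> simp [Form.subst, NModel.force, hts]
  | imp A B ihA ihB =>
      have hA : FreeFor t A := fun v hv => hfree v hv ∘ Set.mem_union_left _
      have hB : FreeFor t B := fun v hv => hfree v hv ∘ Set.mem_union_right _
      intro b w ρ
      cases b <;> simp only [Form.subst, NModel.force, ihA hA, ihB hB]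
  | and A B ihA ihB =>
      have hA : FreeFor t A := fun v hv => hfree v hv ∘ Set.mem_union_left _
      have hB : FreeFor t B := fun v hv => hfree v hv ∘ Set.mem_union_right _
      intro b w ρ
      cases b <;> simp only [Form.subst, NModel.force, ihA hA, ihB hB]
  | or A B ihA ihB =>
      have hA : FreeFor t A := fun v hv => hfree v hv ∘ Set.mem_union_left _
      have hB : FreeFor t B := fun v hv => hfree v hv ∘ Set.mem_union_right _
      intro b w ρ
      cases b <;> simp only [Form.subst, NModel.force, ihA hA, ihB hB]
  | neg A ihA =>
      have hA : FreeFor t A := hfree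
      intro b w ρ
      cases b <;> simp only [Form.subst, NModel.force, ihA hA]
  | all z A ihA =>
      intro b w ρ
      by_cases hzx : z = x
      · subst hzx
        simp only [Form.subst, if_pos rfl]
        exact force_agree M _ b w ρ _ (fun v hv => by
          simp only [upd, if_neg (show v ≠ z from hv.2)])
      · have hA : FreeFor t A := fun v hv hb =>
          hfree v hv (Set.mem_insert_iff.mpr (Or.inr hb))
        have hzt : ∀ v ∈ t.fv, v ≠ z := fun v hv hvz =>
          hfree v hv (Set.mem_insert_iff.mpr (Or.inl hvz))
        have key : ∀ d : M.D,
            upd (upd ρ z d) x (M.tval (upd ρ z d) t) = upd (upd ρ x (M.tval ρ t)) z d := by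
          intro d
          have ht : M.tval (upd ρ z d) t = M.tval ρ t :=
            tval_agree M t (fun v hv => by simp [upd, hzt v hv])
          rw [ht, upd_comm ρ hzx]
        cases b <;>
          simp only [Form.subst, if_neg hzx, NModel.force, ihA hA, key]
  | ex z A ihA =>
      intro b w ρ
      by_cases hzx : z = x
      · subst hzx
        simp only [Form.subst, if_pos rfl]
        exact force_agree M _ b w ρ _ (fun v hv => by
          simp only [upd, if_neg (show v ≠ z from hv.2)])
      · have hA : FreeFor t A := fun v hv hb =>
          hfree v hv (Set.mem_insert_iff.mpr (Or.inr hb))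
        have hzt : ∀ v ∈ t.fv, v ≠ z := fun v hv hvz =>
          hfree v hv (Set.mem_insert_iff.mpr (Or.inl hvz))
        have key : ∀ d : M.D,
            upd (upd ρ z d) x (M.tval (upd ρ z d) t) = upd (upd ρ x (M.tval ρ t)) z d := by
          intro d
          have ht : M.tval (upd ρ z d) t = M.tval ρ t :=
            tval_agree M t (fun v hv => by simp [upd, hzt v hv])
          rw [ht, upd_comm ρ hzx]
        cases b <;>
          simp only [Form.subst, if_neg hzx, NModel.force, ihA hA, key]
  | iq z F G ihF ihG =>
      intro b w ρ
      by_cases hzx : z = x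
      · subst hzx
        simp only [Form.subst, if_pos rfl]
        exact force_agree M _ b w ρ _ (fun v hv => by
          simp only [upd, if_neg (show v ≠ z from hv.2)])
      · have hF : FreeFor t F := fun v hv hb =>
          hfree v hv (Set.mem_insert_iff.mpr (Or.inr (Set.mem_union_left _ hb)))
        have hG : FreeFor t G := fun v hv hb =>
          hfree v hv (Set.mem_insert_iff.mpr (Or.inr (Set.mem_union_right _ hb)))
        have hzt : ∀ v ∈ t.fv, v ≠ z := fun v hv hvz =>
          hfree v hv (Set.mem_insert_iff.mpr (Or.inl hvz))
        have key : ∀ d : M.D,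
            upd (upd ρ z d) x (M.tval (upd ρ z d) t) = upd (upd ρ x (M.tval ρ t)) z d := by
          intro d
          have ht : M.tval (upd ρ z d) t = M.tval ρ t :=
            tval_agree M t (fun v hv => by simp [upd, hzt v hv])
          rw [ht, upd_comm ρ hzx]
        cases b <;>
          simp only [Form.subst, if_neg hzx, NModel.force, ihF hF, ihG hG, key]

end Aux

/-- In every Nelsonian Kripke structure the semantic clause for
`Ix[F,G]` coincides with the clause for `∃x(F ∧ ∀y(F[x:=y] → y=x) ∧ G)`: a world
forces the former iff it forces the latter (`y` a fresh variable). -/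
theorem iq_clause_coincides_russell (M : NModel ℕ 0) (x y : ℕ) (F G : Form ℕ)
    (hyx : y ≠ x) (hyF : y ∉ F.fv) (hyFb : y ∉ F.bv)
    (w : M.W) (ρ : ℕ → M.D) :
    M.force true (Form.iq x F G) w ρ ↔ M.force true (russell x y F G) w ρ := by
  
  have hFF : FreeFor (Tm.var y) F := by
    intro v hv
    have : v = y := hv
    subst this; exact hyFb
  constructor
  · rintro ⟨d, hd, hFd, hGd, huniq⟩
    refine ⟨d, hd, hFd, ?_, hGd⟩
    intro w' hr e he w'' hr' hFs
    -- translate hFs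
    have h1 : M.force true F w'' (upd (upd (upd ρ x d) y e) x e) := by
      have := (force_subst M x (Tm.var y) F hFF true w'' (upd (upd ρ x d) y e)).1 hFs
      simpa [NModel.tval, upd, hyx] using this
    have h2 : M.force true F w'' (upd ρ x e) := by
      refine force_agree_mp M F true w'' _ _ ?_ h1
      intro v hv
      by_cases hvx : v = x
      · simp [upd, hvx]
      · have hvy : v ≠ y := fun q => hyF (q ▸ hv)
        simp [upd, hvx, hvy]
    have := huniq w' hr e he w'' hr' h2
    have heq := (M.eq_pos w'' d e).1 this
    have hlist : [Tm.var y, Tm.var x].map (M.tval (upd (upd ρ x d) y e)) = [e, d] := by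
      simp [NModel.tval, upd, Ne.symm hyx]
    show M.pos w'' 0 ([Tm.var y, Tm.var x].map (M.tval (upd (upd ρ x d) y e)))
    rw [hlist]
    exact (M.eq_pos w'' e d).2 ⟨heq.1.symm, heq.1 ▸ heq.2⟩
  · rintro ⟨d, hd, hFd, hall, hGd⟩
    refine ⟨d, hd, hFd, hGd, ?_⟩
    intro w' hr e he w'' hr' hFe
    have h1 : M.force true F w'' (upd (upd (upd ρ x d) y e) x e) := by
      refine force_agree_mp M F true w'' _ _ ?_ hFe
      intro v hv
      by_cases hvx : v = x
      · simp [upd, hvx]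
      · have hvy : v ≠ y := fun q => hyF (q ▸ hv)
        simp [upd, hvx, hvy]
    have hFs : M.force true (F.subst x (Tm.var y)) w'' (upd (upd ρ x d) y e) := by
      refine (force_subst M x (Tm.var y) F hFF true w'' (upd (upd ρ x d) y e)).2 ?_
      simpa [NModel.tval, upd, hyx] using h1
    have hpos : M.pos w'' 0 ([Tm.var y, Tm.var x].map (M.tval (upd (upd ρ x d) y e))) :=
      hall w' hr e he w'' hr' hFs
    have hlist : [Tm.var y, Tm.var x].map (M.tval (upd (upd ρ x d) y e)) = [e, d] := by
      simp [NModel.tval, upd, Ne.symm hyx]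
    rw [hlist] at hpos
    have heq := (M.eq_pos w'' e d).1 hpos
    exact (M.eq_pos w'' d e).2 ⟨heq.1.symm, heq.1 ▸ heq.2⟩
end
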